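/- arXiv:1503.05988 — 9 statements merged into one kernel-verified Lean document; each statement's English description precedes it below -/
import Mathlib

section
/- In the Bayesian persuasion problem with i.i.d. action payoffs, there exists a direct signaling scheme that is incentive compatible, achieves the maximum expected sender utility among all incentive-compatible direct schemes, and is symmetric, i.e., has an s-signature (x, y). -/
open Finset

namespace IID

variable {n m : ℕ}

/-- the i.i.d. prior on states `θ ∈ [m]^n`: `λ(θ) = ∏ i, q (θ i)` -/
def prior (q : Fin m → ℝ) (θ : Fin n → Fin m) : ℝ := ∏ i, q (θ i)

/-- a direct signaling scheme: each state gets a probability distribution over the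
`n` signals, signal `i` recommending action `i` -/
def IsScheme (φ : (Fin n → Fin m) → Fin n → ℝ) : Prop :=
  (∀ θ i, 0 ≤ φ θ i) ∧ ∀ θ, ∑ i, φ θ i = 1

/-- incentive compatibility: conditioned on each signal `i`, the recommended action `i`
maximizes the receiver's (type-determined) expected payoff -/
def IC (q ρ : Fin m → ℝ) (φ : (Fin n → Fin m) → Fin n → ℝ) : Prop :=
  ∀ i j : Fin n,
    ∑ θ : Fin n → Fin m, prior q θ * φ θ i * ρ (θ j) ≤
      ∑ θ : Fin n → Fin m, prior q θ * φ θ i * ρ (θ i)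

/-- expected sender utility when the receiver follows the recommendations -/
def senderUtil (q ξ : Fin m → ℝ) (φ : (Fin n → Fin m) → Fin n → ℝ) : ℝ :=
  ∑ θ : Fin n → Fin m, ∑ i, prior q θ * φ θ i * ξ (θ i)

/-- the signature of a scheme: `signature q φ i j k` is the joint probability that the
scheme sends signal `i` and action `j` has type `k` (entry `M^{σ_i}_{jk}`) -/
def signature (q : Fin m → ℝ) (φ : (Fin n → Fin m) → Fin n → ℝ)
    (i j : Fin n) (k : Fin m) : ℝ :=
  ∑ θ : Fin n → Fin m, if θ j = k then prior q θ * φ θ i else 0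

end IID

open IID

/-!
The prior is exchangeable, so relabelling the actions by a permutation `π` maps feasible
(IC) schemes to feasible schemes with the same sender utility. Since feasibility and utility
are linear in the scheme, the average of all relabellings of an optimal scheme (which exists,
the feasible set being compact and containing the uniform scheme) is again optimal. Its
signature is invariant under every permutation of the actions, and the symmetric group acts
2-transitively, so all diagonal rows coincide and all off-diagonal rows coincide.
-/

open Equiv

lemma exists_forall_diag_eq_offDiag_eq_of_perm_invariant {α β : Type*} [Nonempty α]
    {M : α → α → β} (hM : ∀ (σ : Perm α) i j, M (σ i) (σ j) = M i j) :
    ∃ x y, (∀ i, M i i = x) ∧ ∀ i j, j ≠ i → M i j = y := by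
  classical
  obtain ⟨a⟩ := ‹Nonempty α›
  have hdiag : ∀ i, M i i = M a a := fun i => by simpa using hM (swap a i) a a
  by_cases hpair : ∃ b c : α, c ≠ b
  · obtain ⟨b, c, hcb⟩ := hpair
    refine ⟨M a a, M b c, hdiag, fun i j hji => ?_⟩
    obtain ⟨σ, hσb, hσc⟩ := MulAction.is_two_pretransitive_iff.mp
      (Perm.isMultiplyPretransitive α 2) hcb.symm hji.symm
    rw [← hσb, ← hσc]
    exact hM σ b c
  · exact ⟨M a a, M a a, hdiag, fun i j hji => (hpair ⟨i, j, hji⟩).elim⟩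

namespace IID

variable {n m : ℕ} {q ξ ρ F : Fin m → ℝ} {φ : (Fin n → Fin m) → Fin n → ℝ}

def moment (q : Fin m → ℝ) (φ : (Fin n → Fin m) → Fin n → ℝ) (i j : Fin n)
    (F : Fin m → ℝ) : ℝ :=
  ∑ θ, prior q θ * φ θ i * F (θ j)

lemma senderUtil_eq_sum_moment : senderUtil q ξ φ = ∑ i, moment q φ i i ξ :=
  Finset.sum_comm

lemma signature_eq_moment (i j : Fin n) (k : Fin m) :
    signature q φ i j k = moment q φ i j (Pi.single k 1) := by
  refine Finset.sum_congr rfl fun θ _ => ?_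
  by_cases h : θ j = k <;> simp [h]

lemma prior_comp_perm (π : Perm (Fin n)) (θ : Fin n → Fin m) :
    prior q (θ ∘ π) = prior q θ :=
  Equiv.prod_comp π fun i => q (θ i)

def relabel (π : Perm (Fin n)) (φ : (Fin n → Fin m) → Fin n → ℝ) :
    (Fin n → Fin m) → Fin n → ℝ :=
  fun θ i => φ (θ ∘ π) (π⁻¹ i)

lemma moment_relabel (π : Perm (Fin n)) (i j : Fin n) :
    moment q (relabel π φ) i j F = moment q φ (π⁻¹ i) (π⁻¹ j) F := by
  rw [moment, ← (π.arrowCongr (Equiv.refl (Fin m))).sum_comp]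
  refine Finset.sum_congr rfl fun θ _ => ?_
  have hθ : (π.arrowCongr (Equiv.refl (Fin m))) θ = θ ∘ ⇑π⁻¹ := rfl
  simp only [relabel, hθ, Function.comp_assoc, Perm.inv_def, symm_comp_self,
    Function.comp_id, prior_comp_perm, Function.comp_apply]

noncomputable def symmetrize (φ : (Fin n → Fin m) → Fin n → ℝ) : (Fin n → Fin m) → Fin n → ℝ :=
  fun θ i => (∑ π : Perm (Fin n), relabel π φ θ i) / Fintype.card (Perm (Fin n))

lemma moment_symmetrize (i j : Fin n) :
    moment q (symmetrize φ) i j F =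
      (∑ π : Perm (Fin n), moment q φ (π⁻¹ i) (π⁻¹ j) F) / Fintype.card (Perm (Fin n)) := by
  simp only [← moment_relabel]
  simp only [moment, symmetrize, Finset.sum_div, Finset.mul_sum, Finset.sum_mul]
  rw [Finset.sum_comm]
  refine Finset.sum_congr rfl fun π _ => Finset.sum_congr rfl fun θ _ => ?_
  ring

lemma moment_symmetrize_perm (σ : Perm (Fin n)) (i j : Fin n) :
    moment q (symmetrize φ) (σ i) (σ j) F = moment q (symmetrize φ) i j F := by
  simp only [moment_symmetrize]
  congr 1
  exact Fintype.sum_equiv (Equiv.mulLeft σ⁻¹) _ _ fun π => by simp [Perm.mul_apply]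

lemma signature_symmetrize_perm (σ : Perm (Fin n)) (i j : Fin n) (k : Fin m) :
    signature q (symmetrize φ) (σ i) (σ j) k = signature q (symmetrize φ) i j k := by
  simp only [signature_eq_moment, moment_symmetrize_perm]

lemma IsScheme.relabel (hφ : IsScheme φ) (π : Perm (Fin n)) : IsScheme (relabel π φ) :=
  ⟨fun _ _ => hφ.1 _ _, fun _ => (Equiv.sum_comp π⁻¹ _).trans (hφ.2 _)⟩

lemma IsScheme.symmetrize (hφ : IsScheme φ) : IsScheme (symmetrize φ) := by
  refine ⟨fun θ i => div_nonneg (Finset.sum_nonneg fun π _ => (hφ.relabel π).1 θ i)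
    (Nat.cast_nonneg _), fun θ => ?_⟩
  simp only [IID.symmetrize, ← Finset.sum_div]
  rw [Finset.sum_comm]
  simp [fun π => (hφ.relabel π).2 θ]

lemma IC.symmetrize (hφ : IC q ρ φ) : IC q ρ (symmetrize φ) := fun i j => by
  change moment q _ i j ρ ≤ moment q _ i i ρ
  rw [moment_symmetrize, moment_symmetrize]
  gcongr with π
  exact hφ _ _

lemma senderUtil_symmetrize : senderUtil q ξ (symmetrize φ) = senderUtil q ξ φ := by
  simp only [senderUtil_eq_sum_moment, moment_symmetrize, ← Finset.sum_div]
  rw [Finset.sum_comm]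
  simp_rw [fun π : Perm (Fin n) => Equiv.sum_comp π⁻¹ fun i => moment q φ i i ξ]
  simp

lemma IsScheme.le_one (hφ : IsScheme φ) (θ : Fin n → Fin m) (i : Fin n) : φ θ i ≤ 1 :=
  (Finset.single_le_sum (fun j _ => hφ.1 θ j) (Finset.mem_univ i)).trans_eq (hφ.2 θ)

lemma isClosed_setOf_isScheme : IsClosed {φ : (Fin n → Fin m) → Fin n → ℝ | IsScheme φ} := by
  simp only [IsScheme, Set.ofPred_and, Set.ofPred_forall]
  exact (isClosed_iInter fun θ => isClosed_iInter fun i => isClosed_le continuous_const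
    (by fun_prop)).inter (isClosed_iInter fun θ => isClosed_eq (by fun_prop) continuous_const)

lemma isClosed_setOf_IC (q ρ : Fin m → ℝ) :
    IsClosed {φ : (Fin n → Fin m) → Fin n → ℝ | IC q ρ φ} := by
  simp only [IC, Set.ofPred_forall]
  exact isClosed_iInter fun i => isClosed_iInter fun j => isClosed_le (by fun_prop) (by fun_prop)

lemma isCompact_setOf_isScheme_and_IC (q ρ : Fin m → ℝ) :
    IsCompact {φ : (Fin n → Fin m) → Fin n → ℝ | IsScheme φ ∧ IC q ρ φ} :=
  isCompact_Icc.of_isClosed_subset (isClosed_setOf_isScheme.inter (isClosed_setOf_IC q ρ))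
    fun _ hφ => ⟨fun θ i => hφ.1.1 θ i, fun θ i => hφ.1.le_one θ i⟩

lemma continuous_senderUtil (q ξ : Fin m → ℝ) :
    Continuous (senderUtil (n := n) q ξ) := by
  unfold senderUtil
  fun_prop

lemma isScheme_const (hn : 0 < n) :
    IsScheme fun (_ : Fin n → Fin m) (_ : Fin n) => (n : ℝ)⁻¹ :=
  ⟨fun _ _ => by positivity, fun _ => by simp [hn.ne']⟩

lemma IC_const (q ρ : Fin m → ℝ) (c : ℝ) :
    IC q ρ fun (_ : Fin n → Fin m) (_ : Fin n) => c := fun i j => by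
  -- a constant scheme is its own relabelling; relabelling by `swap i j` exchanges `i` and `j`
  have h := moment_relabel (q := q) (φ := fun _ _ => c) (F := ρ) (swap i j) i i
  rw [swap_inv, swap_apply_left] at h
  exact h.ge

lemma exists_optimal_scheme (hn : 0 < n) (q ξ ρ : Fin m → ℝ) :
    ∃ φ : (Fin n → Fin m) → Fin n → ℝ, IsScheme φ ∧ IC q ρ φ ∧
      ∀ ψ : (Fin n → Fin m) → Fin n → ℝ, IsScheme ψ → IC q ρ ψ →
        senderUtil q ξ ψ ≤ senderUtil q ξ φ := by
  obtain ⟨φ, ⟨hφ, hIC⟩, hmax⟩ := (isCompact_setOf_isScheme_and_IC q ρ).exists_isMaxOn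
    ⟨_, isScheme_const hn, IC_const q ρ _⟩ (continuous_senderUtil q ξ).continuousOn
  exact ⟨φ, hφ, hIC, fun ψ hψ hψIC => hmax ⟨hψ, hψIC⟩⟩

end IID

open IID

theorem symmetric_optimal_scheme_exists_general
    {n m : ℕ} (hn : 0 < n)
    (q ξ ρ : Fin m → ℝ) :
    ∃ φ : (Fin n → Fin m) → Fin n → ℝ,
      IsScheme φ ∧ IC q ρ φ ∧
      (∀ ψ : (Fin n → Fin m) → Fin n → ℝ,
        IsScheme ψ → IC q ρ ψ → senderUtil q ξ ψ ≤ senderUtil q ξ φ) ∧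
      ∃ x y : Fin m → ℝ,
        (∀ i k, signature q φ i i k = x k) ∧
        ∀ i j, j ≠ i → ∀ k, signature q φ i j k = y k := by
  obtain ⟨φ, hφ, hIC, hopt⟩ := exists_optimal_scheme hn q ξ ρ
  have : Nonempty (Fin n) := Fin.pos_iff_nonempty.mp hn
  obtain ⟨x, y, hx, hy⟩ := exists_forall_diag_eq_offDiag_eq_of_perm_invariant
    (M := signature q (symmetrize φ))
    fun σ i j => funext (signature_symmetrize_perm σ i j)
  exact ⟨symmetrize φ, hφ.symmetrize, hIC.symmetrize,
    fun ψ hψ hψIC => (hopt ψ hψ hψIC).trans_eq senderUtil_symmetrize.symm,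
    x, y, fun i => congrFun (hx i), fun i j hji => congrFun (hy i j hji)⟩

/-- with i.i.d. action payoffs there is a direct signaling scheme which
is incentive compatible, optimal among incentive-compatible direct schemes, and
symmetric, i.e. has an s-signature `(x, y)`. -/
theorem symmetric_optimal_scheme_exists
    {n m : ℕ} (hn : 0 < n)
    (q ξ ρ : Fin m → ℝ) (hq0 : ∀ k, 0 ≤ q k) (hq1 : ∑ k, q k = 1) :
    ∃ φ : (Fin n → Fin m) → Fin n → ℝ,
      IsScheme φ ∧ IC q ρ φ ∧
      (∀ ψ : (Fin n → Fin m) → Fin n → ℝ,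
        IsScheme ψ → IC q ρ ψ → senderUtil q ξ ψ ≤ senderUtil q ξ φ) ∧
      ∃ x y : Fin m → ℝ,
        (∀ i k, signature q φ i i k = x k) ∧
        ∀ i j, j ≠ i → ∀ k, signature q φ i j k = y k :=
  symmetric_optimal_scheme_exists_general hn q ξ ρ
end

section
/- In the i.i.d. persuasion model, the optimal value of the linear program: maximize n·(ξ·x) over x, y ∈ ℝ^m subject to ρ·x ≥ ρ·y, x + (n−1)y = q, ‖x‖_1 = 1/n, and x, y ≥ 0, is at least the maximum expected sender utility over all incentive-compatible direct signaling schemes. -/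
open Finset

open IID

/-! `n x_k` is the probability that the recommended action has type `k`, so `n (ξ ⬝ᵥ x)` is the
sender's utility, `∑ x = 1 / n`, and `x ≤ q` because every action has type `k` with probability
`q_k`. Averaging the IC constraints over the deviations `j` shows that obeying gives the receiver
at least the prior expectation `ρ ⬝ᵥ q`, which is exactly what `y := (q - x) / (n - 1)` needs for
`ρ ⬝ᵥ y ≤ ρ ⬝ᵥ x` (when `n = 1`, `x = q` and `y := x` works). -/

lemma exists_lp_completion {ι : Type*} [Fintype ι] {n : ℕ} (hn : n ≠ 0) {q ρ x : ι → ℝ}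
    (hx0 : ∀ k, 0 ≤ x k) (hxq : ∀ k, x k ≤ q k) (hx1 : ∑ k, x k = 1 / n)
    (hq1 : ∑ k, q k = 1) (hρ : ρ ⬝ᵥ q ≤ n * ρ ⬝ᵥ x) :
    ∃ y : ι → ℝ, (∀ k, 0 ≤ y k) ∧ ρ ⬝ᵥ y ≤ ρ ⬝ᵥ x ∧ ∀ k, x k + ((n : ℝ) - 1) * y k = q k := by
  obtain rfl | hn2 : n = 1 ∨ 2 ≤ n := by omega
  · have hxq_eq : ∀ k, x k = q k := fun k =>
      (sum_eq_sum_iff_of_le fun k _ => hxq k).1 (by simpa [hq1] using hx1) k (mem_univ k)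
    exact ⟨x, hx0, le_rfl, fun k => by simp [hxq_eq]⟩
  have hn1 : (0 : ℝ) < n - 1 := sub_pos.2 (Nat.one_lt_cast.2 hn2)
  refine ⟨fun k => (q k - x k) / (n - 1), fun k => div_nonneg (sub_nonneg.2 (hxq k)) hn1.le,
    ?_, fun k => by field_simp; ring⟩
  have hρy : ρ ⬝ᵥ (fun k => (q k - x k) / (n - 1)) = (ρ ⬝ᵥ q - ρ ⬝ᵥ x) / (n - 1) := by
    simp [dotProduct, mul_div_assoc', ← sum_div, mul_sub]
  rw [hρy, div_le_iff₀ hn1]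
  linarith

namespace IID

variable {n m : ℕ} {q : Fin m → ℝ} {φ : (Fin n → Fin m) → Fin n → ℝ}

lemma prior_nonneg (hq0 : ∀ k, 0 ≤ q k) (θ : Fin n → Fin m) : 0 ≤ prior q θ :=
  prod_nonneg fun _ _ => hq0 _

lemma sum_prior (hq1 : ∑ k, q k = 1) : ∑ θ : Fin n → Fin m, prior q θ = 1 := by
  unfold prior
  rw [← Fintype.sum_pow, hq1, one_pow]

lemma sum_prior_mul_apply (hq1 : ∑ k, q k = 1) (j : Fin n) (g : Fin m → ℝ) :
    ∑ θ : Fin n → Fin m, prior q θ * g (θ j) = ∑ k, q k * g k := by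
  have hsplit : ∀ θ : Fin n → Fin m,
      prior q θ * g (θ j) = ∏ i, q (θ i) * (if i = j then g (θ i) else 1) := fun θ => by
    rw [prod_mul_distrib, Fintype.prod_ite_eq']; rfl
  simp_rw [hsplit]
  rw [← Fintype.prod_sum fun i t => q t * if i = j then g t else 1]
  rw [Fintype.prod_eq_single j fun i hi => by simp [hi, hq1]]
  simp

lemma IsScheme.pos (hφ : IsScheme φ) : 0 < n := by
  refine Nat.pos_of_ne_zero fun hn => ?_
  subst hn
  simpa using hφ.2 Fin.elim0

lemma signature_nonneg (hq0 : ∀ k, 0 ≤ q k) (hφ : IsScheme φ) (i j : Fin n) (k : Fin m) :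
    0 ≤ signature q φ i j k :=
  sum_nonneg fun θ _ => by
    split_ifs
    exacts [mul_nonneg (prior_nonneg hq0 θ) (hφ.1 θ i), le_rfl]

lemma sum_mul_signature (f : Fin m → ℝ) (i j : Fin n) :
    ∑ k, f k * signature q φ i j k = ∑ θ, prior q θ * φ θ i * f (θ j) := by
  simp_rw [signature, mul_sum, mul_ite, mul_zero]
  rw [sum_comm]
  exact sum_congr rfl fun θ _ => by rw [Fintype.sum_ite_eq]; ring

lemma sum_signature_signal (hq1 : ∑ k, q k = 1) (hφ : IsScheme φ) (j : Fin n) (k : Fin m) :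
    ∑ i, signature q φ i j k = q k := by
  calc ∑ i, signature q φ i j k
      = ∑ θ : Fin n → Fin m, prior q θ * (if θ j = k then 1 else 0) := by
        simp_rw [signature, mul_ite, mul_one, mul_zero]
        rw [sum_comm]
        refine sum_congr rfl fun θ _ => ?_
        split_ifs <;> simp [← mul_sum, hφ.2 θ]
    _ = q k := by rw [sum_prior_mul_apply hq1 j fun t => if t = k then 1 else 0]; simp

lemma signature_le (hq0 : ∀ k, 0 ≤ q k) (hq1 : ∑ k, q k = 1) (hφ : IsScheme φ)
    (i j : Fin n) (k : Fin m) : signature q φ i j k ≤ q k :=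
  sum_signature_signal hq1 hφ j k ▸
    single_le_sum (fun i' _ => signature_nonneg hq0 hφ i' j k) (mem_univ i)

def recommendedTypeProb (q : Fin m → ℝ) (φ : (Fin n → Fin m) → Fin n → ℝ) (k : Fin m) : ℝ :=
  ∑ i, signature q φ i i k

lemma recommendedTypeProb_nonneg (hq0 : ∀ k, 0 ≤ q k) (hφ : IsScheme φ) (k : Fin m) :
    0 ≤ recommendedTypeProb q φ k :=
  sum_nonneg fun i _ => signature_nonneg hq0 hφ i i k

lemma recommendedTypeProb_le (hq0 : ∀ k, 0 ≤ q k) (hq1 : ∑ k, q k = 1) (hφ : IsScheme φ)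
    (k : Fin m) : recommendedTypeProb q φ k ≤ n * q k := by
  simpa [recommendedTypeProb] using sum_le_sum fun i (_ : i ∈ univ) => signature_le hq0 hq1 hφ i i k

lemma dotProduct_recommendedTypeProb (f : Fin m → ℝ) :
    f ⬝ᵥ recommendedTypeProb q φ = ∑ i, ∑ θ, prior q θ * φ θ i * f (θ i) := by
  simp_rw [dotProduct, recommendedTypeProb, mul_sum]
  rw [sum_comm]
  exact sum_congr rfl fun i _ => sum_mul_signature f i i

lemma sum_recommendedTypeProb (hq1 : ∑ k, q k = 1) (hφ : IsScheme φ) :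
    ∑ k, recommendedTypeProb q φ k = 1 := by
  calc ∑ k, recommendedTypeProb q φ k = (fun _ => 1) ⬝ᵥ recommendedTypeProb q φ := by
        simp [dotProduct]
    _ = ∑ θ, prior q θ * ∑ i, φ θ i := by
        rw [dotProduct_recommendedTypeProb, sum_comm]
        simp [mul_sum]
    _ = 1 := by simp [hφ.2, sum_prior hq1]

lemma senderUtil_eq_dotProduct (ξ : Fin m → ℝ) :
    senderUtil q ξ φ = ξ ⬝ᵥ recommendedTypeProb q φ := by
  rw [dotProduct_recommendedTypeProb, senderUtil, sum_comm]

lemma dotProduct_le_of_IC (hq1 : ∑ k, q k = 1) {ρ : Fin m → ℝ} (hφ : IsScheme φ)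
    (hIC : IC q ρ φ) : ρ ⬝ᵥ q ≤ ρ ⬝ᵥ recommendedTypeProb q φ := by
  refine le_of_mul_le_mul_left ?_ (Nat.cast_pos.2 hφ.pos : (0 : ℝ) < n)
  calc (n : ℝ) * ρ ⬝ᵥ q = ∑ j : Fin n, ∑ k, ρ k * ∑ i, signature q φ i j k := by
        simp [sum_signature_signal hq1 hφ, dotProduct]
    _ = ∑ j, ∑ i, ∑ θ : Fin n → Fin m, prior q θ * φ θ i * ρ (θ j) := by
        simp_rw [mul_sum, ← sum_mul_signature]
        exact sum_congr rfl fun j _ => sum_comm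
    _ ≤ ∑ _j : Fin n, ∑ i, ∑ θ, prior q θ * φ θ i * ρ (θ i) :=
        sum_le_sum fun j _ => sum_le_sum fun i _ => hIC i j
    _ = n * ρ ⬝ᵥ recommendedTypeProb q φ := by
        simp [dotProduct_recommendedTypeProb]

end IID

/-- the optimal value of the LP
`max n·(ξ·x) s.t. ρ·x ≥ ρ·y, x + (n−1)y = q, ‖x‖₁ = 1/n, x, y ≥ 0`
is at least the expected sender utility of every incentive-compatible direct scheme:
for each such scheme there is a feasible LP point whose objective value dominates it. -/
theorem lp_relaxation_upper_bound
    {n m : ℕ} (q ξ ρ : Fin m → ℝ) (hq0 : ∀ k, 0 ≤ q k) (hq1 : ∑ k, q k = 1)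
    (φ : (Fin n → Fin m) → Fin n → ℝ) (hφ : IsScheme φ) (hIC : IC q ρ φ) :
    ∃ x y : Fin m → ℝ,
      (∀ k, 0 ≤ x k) ∧ (∀ k, 0 ≤ y k) ∧
      (∑ k, ρ k * y k ≤ ∑ k, ρ k * x k) ∧
      (∀ k, x k + ((n : ℝ) - 1) * y k = q k) ∧
      (∑ k, x k = 1 / n) ∧
      senderUtil q ξ φ ≤ (n : ℝ) * ∑ k, ξ k * x k := by
  have hn : (0 : ℝ) < n := Nat.cast_pos.2 hφ.pos
  set D := recommendedTypeProb q φ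
  have hscale : ∀ f : Fin m → ℝ, (n : ℝ) * f ⬝ᵥ ((n : ℝ)⁻¹ • D) = f ⬝ᵥ D := fun f => by
    rw [dotProduct_smul, smul_eq_mul, mul_inv_cancel_left₀ hn.ne']
  have hx0 : ∀ k, 0 ≤ ((n : ℝ)⁻¹ • D) k := fun k =>
    mul_nonneg (inv_nonneg.2 hn.le) (recommendedTypeProb_nonneg hq0 hφ k)
  have hx1 : ∑ k, ((n : ℝ)⁻¹ • D) k = 1 / n := by
    simp [← mul_sum, D, sum_recommendedTypeProb hq1 hφ]
  obtain ⟨y, hy0, hyρ, hxy⟩ := exists_lp_completion hφ.pos.ne' hx0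
    (fun k => (inv_mul_le_iff₀ hn).2 (recommendedTypeProb_le hq0 hq1 hφ k)) hx1 hq1
    (hscale ρ ▸ dotProduct_le_of_IC hq1 hφ hIC)
  exact ⟨_, y, hx0, hy0, hyρ, hxy, hx1, (senderUtil_eq_dotProduct ξ).trans_le (hscale ξ).ge⟩
end

section
/- In the i.i.d. persuasion model with nonnegative payoff vectors ξ, ρ ≥ 0, let (x*, y*) be an optimal solution of the linear program: maximize n·(ξ·x) subject to ρ·x ≥ ρ·y, x + (n−1)y = q, ‖x‖_1 = 1/n, x, y ≥ 0. Then there exists an incentive-compatible direct signaling scheme whose expected sender utility is at least (1 − (1 − 1/n)^n)·n·(ξ·x*), and hence at least (1 − 1/e) times the maximum expected sender utility over all incentive-compatible direct schemes. -/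
open Finset

open IID

section AuxIID

open Finset

variable {n m : ℕ}

private lemma sum_fun_prod (f : Fin n → Fin m → ℝ) :
    ∑ θ : Fin n → Fin m, ∏ l, f l (θ l) = ∏ l, ∑ k, f l k := by
  rw [Finset.prod_univ_sum, Fintype.piFinset_univ]

private lemma prod_ite_mem' (S : Finset (Fin n)) (f g : Fin n → ℝ) :
    ∏ l, (if l ∈ S then f l else g l) = (∏ l ∈ S, f l) * ∏ l ∈ Sᶜ, g l := by
  rw [Finset.prod_ite]
  congr 1
  · congr 1; simp [Finset.filter_mem_eq_inter]
  · congr 1; ext l; simp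

private lemma key_lemma (q c : Fin m → ℝ) (S : Finset (Fin n)) (j : Fin n) (F : Fin m → ℝ) :
    ∑ θ : Fin n → Fin m, prior q θ * ((∏ l ∈ S, c (θ l)) * ∏ l ∈ Sᶜ, (1 - c (θ l))) * F (θ j)
      = (∑ k, q k * (if j ∈ S then c k else 1 - c k) * F k) *
        ∏ l ∈ univ.erase j, (∑ k, q k * (if l ∈ S then c k else 1 - c k)) := by
  have h1 : ∀ θ : Fin n → Fin m,
      prior q θ * ((∏ l ∈ S, c (θ l)) * ∏ l ∈ Sᶜ, (1 - c (θ l))) * F (θ j)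
        = ∏ l, (q (θ l) * (if l ∈ S then c (θ l) else 1 - c (θ l)) * (if l = j then F (θ l) else 1)) := by
    intro θ
    rw [← prod_ite_mem' S (fun l => c (θ l)) (fun l => 1 - c (θ l))]
    have hF : F (θ j) = ∏ l, (if l = j then F (θ l) else 1) := by
      rw [Finset.prod_ite_eq' univ j (fun l => F (θ l))]; simp
    rw [hF, IID.prior, ← Finset.prod_mul_distrib, ← Finset.prod_mul_distrib]
  simp_rw [h1]
  rw [sum_fun_prod (fun l t => (q t * if l ∈ S then c t else 1 - c t) * if l = j then F t else 1)]
  rw [← Finset.mul_prod_erase univ _ (Finset.mem_univ j)]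
  congr 1
  · simp
  · apply Finset.prod_congr rfl
    intro l hl
    have hlj : l ≠ j := Finset.ne_of_mem_erase hl
    simp [hlj]

private lemma base_lemma (q : Fin m → ℝ) (hq1 : ∑ k, q k = 1) (j : Fin n) (F : Fin m → ℝ) :
    ∑ θ : Fin n → Fin m, prior q θ * F (θ j) = ∑ k, q k * F k := by
  have h1 : ∀ θ : Fin n → Fin m,
      prior q θ * F (θ j) = ∏ l, (q (θ l) * (if l = j then F (θ l) else 1)) := by
    intro θ
    have hF : F (θ j) = ∏ l, (if l = j then F (θ l) else 1) := by
      rw [Finset.prod_ite_eq' univ j (fun l => F (θ l))]; simp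
    rw [hF, IID.prior, ← Finset.prod_mul_distrib]
  simp_rw [h1]
  rw [sum_fun_prod (fun l t => q t * if l = j then F t else 1)]
  rw [← Finset.mul_prod_erase univ _ (Finset.mem_univ j)]
  have h2 : ∀ l ∈ univ.erase j, (∑ k, q k * if l = j then F k else 1) = 1 := by
    intro l hl
    have hlj : l ≠ j := Finset.ne_of_mem_erase hl
    simp [hlj, hq1]
  rw [Finset.prod_congr rfl h2]
  simp

end AuxIID

set_option maxHeartbeats 2000000

/-- with nonnegative payoffs, from an optimal solution `(xs, ys)` of the
LP `max n·(ξ·x) s.t. ρ·x ≥ ρ·y, x + (n−1)y = q, ‖x‖₁ = 1/n, x, y ≥ 0` one obtains an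
incentive-compatible direct scheme whose expected sender utility is at least
`(1 − (1 − 1/n)^n)·n·(ξ·xs)`, and hence at least `(1 − 1/e)` times the maximum expected
sender utility of any incentive-compatible direct scheme. -/
theorem independent_signaling_approx
    {n m : ℕ} (hn : 0 < n)
    (q ξ ρ : Fin m → ℝ) (hq0 : ∀ k, 0 ≤ q k) (hq1 : ∑ k, q k = 1)
    (hξ : ∀ k, 0 ≤ ξ k) (hρ : ∀ k, 0 ≤ ρ k)
    (xs ys : Fin m → ℝ)
    -- `(xs, ys)` is feasible for the LP:
    (hxs0 : ∀ k, 0 ≤ xs k) (hys0 : ∀ k, 0 ≤ ys k)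
    (hic : ∑ k, ρ k * ys k ≤ ∑ k, ρ k * xs k)
    (hsum : ∀ k, xs k + ((n : ℝ) - 1) * ys k = q k)
    (hnorm : ∑ k, xs k = 1 / n)
    -- `(xs, ys)` is optimal for the LP:
    (hopt : ∀ x y : Fin m → ℝ,
      (∀ k, 0 ≤ x k) → (∀ k, 0 ≤ y k) →
      (∑ k, ρ k * y k ≤ ∑ k, ρ k * x k) →
      (∀ k, x k + ((n : ℝ) - 1) * y k = q k) →
      (∑ k, x k = 1 / n) →
      (n : ℝ) * ∑ k, ξ k * x k ≤ (n : ℝ) * ∑ k, ξ k * xs k) :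
    ∃ φ : (Fin n → Fin m) → Fin n → ℝ, IsScheme φ ∧ IC q ρ φ ∧
      (1 - (1 - 1 / (n : ℝ)) ^ n) * ((n : ℝ) * ∑ k, ξ k * xs k) ≤ senderUtil q ξ φ ∧
      ∀ ψ : (Fin n → Fin m) → Fin n → ℝ, IsScheme ψ → IC q ρ ψ →
        (1 - 1 / Real.exp 1) * senderUtil q ξ ψ ≤ senderUtil q ξ φ := by
    classical
  have hnR : (0:ℝ) < n := by exact_mod_cast hn
  have hn1R : (1:ℝ) ≤ n := by exact_mod_cast hn
  have hy_nn : ∀ k, 0 ≤ ((n:ℝ) - 1) * ys k := fun k =>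
    mul_nonneg (by linarith) (hys0 k)
  have hx_le_q : ∀ k, xs k ≤ q k := by
    intro k
    have h := hsum k
    have := hy_nn k
    linarith
  set c : Fin m → ℝ := fun k => if q k = 0 then 0 else xs k / q k with hc_def
  have hqc : ∀ k, q k * c k = xs k := by
    intro k
    by_cases h : q k = 0
    · have h1 : xs k = 0 := le_antisymm (h ▸ hx_le_q k) (hxs0 k)
      simp [hc_def, h, h1]
    · simp only [hc_def, h, if_false]
      field_simp [h]
  have hqc' : ∀ k, q k * (1 - c k) = ((n:ℝ) - 1) * ys k := by
    intro k
    have h1 := hqc k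
    have h2 := hsum k
    nlinarith [h1, h2]
  have hc0 : ∀ k, 0 ≤ c k := by
    intro k
    by_cases h : q k = 0
    · simp [hc_def, h]
    · have hq : 0 < q k := lt_of_le_of_ne (hq0 k) (Ne.symm h)
      simp only [hc_def, h, if_false]
      exact div_nonneg (hxs0 k) (hq0 k)
  have hc1 : ∀ k, c k ≤ 1 := by
    intro k
    by_cases h : q k = 0
    · simp [hc_def, h]
    · have hq : 0 < q k := lt_of_le_of_ne (hq0 k) (Ne.symm h)
      simp only [hc_def, h, if_false]
      rw [div_le_one hq]
      exact hx_le_q k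
  have hsumc : ∑ k, q k * c k = 1 / n := by
    rw [Finset.sum_congr rfl fun k _ => hqc k]; exact hnorm
  have hsumc' : ∑ k, q k * (1 - c k) = 1 - 1 / n := by
    rw [Finset.sum_congr rfl fun k _ => hqc' k]
    have h1 : ∑ k, (xs k + ((n:ℝ) - 1) * ys k) = 1 := by
      rw [Finset.sum_congr rfl fun k _ => hsum k]; exact hq1
    rw [Finset.sum_add_distrib, hnorm] at h1
    linarith
  set X : ℝ := 1 / (n:ℝ) with hX_def
  set Yv : ℝ := 1 - 1 / (n:ℝ) with hY_def
  have hX0 : 0 < X := by rw [hX_def]; positivity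
  have hY0 : 0 ≤ Yv := by
    rw [hY_def]
    have : 1 / (n:ℝ) ≤ 1 := by
      rw [div_le_one hnR]; exact hn1R
    linarith
  have hYX : Yv = ((n:ℝ) - 1) * X := by
    rw [hY_def, hX_def]; field_simp
  set P : Finset (Fin n) → ℝ := fun S => ∏ l, (if l ∈ S then X else Yv) with hP_def
  set Pe : Fin n → Finset (Fin n) → ℝ :=
    fun j S => ∏ l ∈ univ.erase j, (if l ∈ S then X else Yv) with hPe_def
  have hPe0 : ∀ j S, 0 ≤ Pe j S := by
    intro j S
    apply Finset.prod_nonneg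
    intro l _
    split <;> [exact le_of_lt hX0; exact hY0]
  have hP0 : ∀ S, 0 ≤ P S := by
    intro S
    apply Finset.prod_nonneg
    intro l _
    split <;> [exact le_of_lt hX0; exact hY0]
  have hPmem : ∀ (j : Fin n) (S : Finset (Fin n)), j ∈ S → X * Pe j S = P S := by
    intro j S hj
    simp only [hP_def, hPe_def]
    rw [← Finset.mul_prod_erase univ _ (Finset.mem_univ j), if_pos hj]
  have hPnot : ∀ (j : Fin n) (S : Finset (Fin n)), j ∉ S → Yv * Pe j S = P S := by
    intro j S hj
    simp only [hP_def, hPe_def]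
    rw [← Finset.mul_prod_erase univ _ (Finset.mem_univ j), if_neg hj]
  have key : ∀ (S : Finset (Fin n)) (j : Fin n) (F : Fin m → ℝ),
      ∑ θ : Fin n → Fin m, prior q θ * ((∏ l ∈ S, c (θ l)) * ∏ l ∈ Sᶜ, (1 - c (θ l))) * F (θ j)
        = (if j ∈ S then ∑ k, xs k * F k else ∑ k, ((n:ℝ) - 1) * ys k * F k) * Pe j S := by
    intro S j F
    rw [key_lemma]
    have hPe_eq : ∏ l ∈ univ.erase j, (∑ k, q k * (if l ∈ S then c k else 1 - c k)) = Pe j S := by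
      simp only [hPe_def]
      apply Finset.prod_congr rfl
      intro l _
      by_cases hlS : l ∈ S
      · simp only [if_pos hlS]; exact hsumc
      · simp only [if_neg hlS]; exact hsumc'
    rw [hPe_eq]
    congr 1
    by_cases hj : j ∈ S
    · simp only [if_pos hj]
      exact Finset.sum_congr rfl fun k _ => by rw [hqc k]
    · simp only [if_neg hj]
      exact Finset.sum_congr rfl fun k _ => by rw [hqc' k]
  set g : Finset (Fin n) → Fin n → ℝ := fun S i =>
    if S.Nonempty then (if i ∈ S then ((S.card : ℝ))⁻¹ else 0) else ((n:ℝ))⁻¹ with hg_def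
  have hg0 : ∀ S i, 0 ≤ g S i := by
    intro S i
    simp only [hg_def]
    split
    · split
      · positivity
      · exact le_rfl
    · positivity
  have hgsum : ∀ S, ∑ i, g S i = 1 := by
    intro S
    by_cases hS : S.Nonempty
    · simp only [hg_def, hS, if_true]
      rw [Finset.sum_ite_mem, Finset.univ_inter, Finset.sum_const, nsmul_eq_mul]
      rw [mul_inv_cancel₀]
      have : 0 < S.card := Finset.card_pos.mpr hS
      positivity
    · simp only [hg_def, hS, if_false]
      rw [Finset.sum_const, nsmul_eq_mul, Finset.card_univ, Fintype.card_fin]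
      field_simp
  set w : (Fin n → Fin m) → Finset (Fin n) → ℝ := fun θ S =>
    (∏ l ∈ S, c (θ l)) * ∏ l ∈ Sᶜ, (1 - c (θ l)) with hw_def
  have hw0 : ∀ θ S, 0 ≤ w θ S := by
    intro θ S
    simp only [hw_def]
    apply mul_nonneg
    · exact Finset.prod_nonneg fun l _ => hc0 (θ l)
    · exact Finset.prod_nonneg fun l _ => by linarith [hc1 (θ l)]
  have hwsum : ∀ θ, ∑ S : Finset (Fin n), w θ S = 1 := by
    intro θ
    have h := Finset.prod_add (fun l => c (θ l)) (fun l => 1 - c (θ l)) univ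
    simp only [add_sub_cancel, Finset.prod_const_one, Finset.powerset_univ] at h
    refine Eq.trans ?_ h.symm
    apply Finset.sum_congr rfl
    intro S _
    simp only [hw_def]
    congr 1
  set φ : (Fin n → Fin m) → Fin n → ℝ := fun θ i => ∑ S : Finset (Fin n), w θ S * g S i
    with hφ_def
  have hφ0 : ∀ θ i, 0 ≤ φ θ i := by
    intro θ i
    simp only [hφ_def]
    exact Finset.sum_nonneg fun S _ => mul_nonneg (hw0 θ S) (hg0 S i)
  have hφsum : ∀ θ, ∑ i, φ θ i = 1 := by
    intro θ
    simp only [hφ_def]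
    rw [Finset.sum_comm]
    have : ∀ S : Finset (Fin n), ∑ i, w θ S * g S i = w θ S := by
      intro S
      rw [← Finset.mul_sum, hgsum, mul_one]
    rw [Finset.sum_congr rfl fun S _ => this S]
    exact hwsum θ
  have hT : ∀ (i j : Fin n) (F : Fin m → ℝ),
      ∑ θ : Fin n → Fin m, prior q θ * φ θ i * F (θ j)
        = ∑ S : Finset (Fin n), g S i *
            ((if j ∈ S then ∑ k, xs k * F k else ∑ k, ((n:ℝ) - 1) * ys k * F k) * Pe j S) := by
    intro i j F
    have h1 : ∀ θ : Fin n → Fin m, prior q θ * φ θ i * F (θ j)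
        = ∑ S : Finset (Fin n), g S i * (prior q θ * w θ S * F (θ j)) := by
      intro θ
      simp only [hφ_def, Finset.mul_sum, Finset.sum_mul]
      apply Finset.sum_congr rfl
      intro S _
      ring
    rw [Finset.sum_congr rfl fun θ _ => h1 θ, Finset.sum_comm]
    apply Finset.sum_congr rfl
    intro S _
    rw [← Finset.mul_sum]
    congr 1
    rw [← key S j F]
  have hIC : IC q ρ φ := by
    intro i j
    rw [hT i j ρ, hT i i ρ]
    apply Finset.sum_le_sum
    intro S _
    by_cases hiS : i ∈ S
    · by_cases hjS : j ∈ S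
      · have h1 : Pe j S = Pe i S :=
          mul_left_cancel₀ (ne_of_gt hX0) (by rw [hPmem j S hjS, hPmem i S hiS])
        rw [if_pos hiS, if_pos hjS, h1]
      · have h1 : Yv * Pe j S = X * Pe i S := by rw [hPnot j S hjS, hPmem i S hiS]
        rw [hYX] at h1
        have h3 : ((n:ℝ) - 1) * Pe j S = Pe i S := by
          apply mul_left_cancel₀ (ne_of_gt hX0)
          calc X * (((n:ℝ) - 1) * Pe j S) = ((n:ℝ) - 1) * X * Pe j S := by ring
            _ = X * Pe i S := h1
        rw [if_pos hiS, if_neg hjS, ← h3]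
        have e1 : ∑ k, ((n:ℝ) - 1) * ys k * ρ k = ((n:ℝ) - 1) * ∑ k, ρ k * ys k := by
          rw [Finset.mul_sum]; exact Finset.sum_congr rfl fun k _ => by ring
        have e2 : ∑ k, xs k * ρ k = ∑ k, ρ k * xs k :=
          Finset.sum_congr rfl fun k _ => by ring
        rw [e1, e2]
        apply mul_le_mul_of_nonneg_left _ (hg0 S i)
        have h4 : (∑ k, ρ k * ys k) * Pe j S ≤ (∑ k, ρ k * xs k) * Pe j S :=
          mul_le_mul_of_nonneg_right hic (hPe0 j S)
        have h5 : (0:ℝ) ≤ (n:ℝ) - 1 := by linarith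
        nlinarith [mul_le_mul_of_nonneg_left h4 h5]
    · by_cases hS : S.Nonempty
      · have hgz : g S i = 0 := by simp [hg_def, hS, hiS]
        rw [hgz, zero_mul, zero_mul]
      · have hSe : S = ∅ := Finset.not_nonempty_iff_eq_empty.mp hS
        subst hSe
        have hPeE : ∀ a : Fin n, Pe a (∅ : Finset (Fin n)) = Yv ^ (n - 1) := by
          intro a
          simp only [hPe_def, Finset.notMem_empty, if_false]
          rw [Finset.prod_const, Finset.card_erase_of_mem (Finset.mem_univ a),
            Finset.card_univ, Fintype.card_fin]
        have hji : j ∉ (∅ : Finset (Fin n)) := Finset.notMem_empty j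
        rw [if_neg hiS, if_neg hji, hPeE i, hPeE j]
  have hxξ : 0 ≤ ∑ k, xs k * ξ k :=
    Finset.sum_nonneg fun k _ => mul_nonneg (hxs0 k) (hξ k)
  have hyξ : 0 ≤ ∑ k, ((n:ℝ) - 1) * ys k * ξ k :=
    Finset.sum_nonneg fun k _ => mul_nonneg (hy_nn k) (hξ k)
  have hPsum : ∑ S : Finset (Fin n), P S = 1 := by
    have h := Finset.prod_add (fun _ : Fin n => X) (fun _ : Fin n => Yv) univ
    have hXY : X + Yv = 1 := by rw [hX_def, hY_def]; ring
    simp only [hXY, Finset.prod_const_one, Finset.powerset_univ] at h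
    refine Eq.trans ?_ h.symm
    apply Finset.sum_congr rfl
    intro S _
    simp only [hP_def]
    rw [prod_ite_mem' S (fun _ => X) (fun _ => Yv)]
    congr 1
  have hPempty : P (∅ : Finset (Fin n)) = Yv ^ n := by
    simp only [hP_def, Finset.notMem_empty, if_false]
    rw [Finset.prod_const, Finset.card_univ, Fintype.card_fin]
  have hlow : (1 - Yv ^ n) * ((n:ℝ) * ∑ k, ξ k * xs k) ≤ senderUtil q ξ φ := by
    have hsu : senderUtil q ξ φ = ∑ i, ∑ S : Finset (Fin n), g S i *
        ((if i ∈ S then ∑ k, xs k * ξ k else ∑ k, ((n:ℝ) - 1) * ys k * ξ k) * Pe i S) := by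
      simp only [IID.senderUtil]
      rw [Finset.sum_comm]
      exact Finset.sum_congr rfl fun i _ => hT i i ξ
    have step1 : ∀ (i : Fin n) (S : Finset (Fin n)),
        (if i ∈ S then ((S.card : ℝ))⁻¹ * ((∑ k, xs k * ξ k) * ((n:ℝ) * P S)) else 0)
          ≤ g S i * ((if i ∈ S then ∑ k, xs k * ξ k else ∑ k, ((n:ℝ) - 1) * ys k * ξ k) * Pe i S) := by
      intro i S
      by_cases hiS : i ∈ S
      · have hSne : S.Nonempty := ⟨i, hiS⟩
        have hgv : g S i = ((S.card : ℝ))⁻¹ := by simp [hg_def, hSne, hiS]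
        have hnX : (n:ℝ) * X = 1 := by rw [hX_def]; field_simp
        have hPen : Pe i S = (n:ℝ) * P S := by
          calc Pe i S = ((n:ℝ) * X) * Pe i S := by rw [hnX, one_mul]
            _ = (n:ℝ) * (X * Pe i S) := by ring
            _ = (n:ℝ) * P S := by rw [hPmem i S hiS]
        rw [if_pos hiS, if_pos hiS, hgv, hPen]
      · rw [if_neg hiS, if_neg hiS]
        exact mul_nonneg (hg0 S i) (mul_nonneg hyξ (hPe0 i S))
    have step2 : ∑ i, ∑ S : Finset (Fin n),
        (if i ∈ S then ((S.card : ℝ))⁻¹ * ((∑ k, xs k * ξ k) * ((n:ℝ) * P S)) else 0)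
          = (∑ k, xs k * ξ k) * ((n:ℝ) * (1 - Yv ^ n)) := by
      rw [Finset.sum_comm]
      have h2 : ∀ S : Finset (Fin n),
          (∑ i, if i ∈ S then ((S.card : ℝ))⁻¹ * ((∑ k, xs k * ξ k) * ((n:ℝ) * P S)) else 0)
            = (if S = ∅ then 0 else (∑ k, xs k * ξ k) * ((n:ℝ) * P S)) := by
        intro S
        rw [Finset.sum_ite_mem, Finset.univ_inter, Finset.sum_const, nsmul_eq_mul]
        by_cases hSe : S = ∅
        · subst hSe; simp
        · rw [if_neg hSe]
          have hcard : (0:ℝ) < (S.card : ℝ) := by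
            have : 0 < S.card := Finset.card_pos.mpr (Finset.nonempty_iff_ne_empty.mpr hSe)
            exact_mod_cast this
          field_simp
      rw [Finset.sum_congr rfl fun S _ => h2 S]
      have h3 : ∀ S : Finset (Fin n), (if S = ∅ then 0 else (∑ k, xs k * ξ k) * ((n:ℝ) * P S))
          = (∑ k, xs k * ξ k) * ((n:ℝ) * P S)
            - (if S = ∅ then (∑ k, xs k * ξ k) * ((n:ℝ) * P S) else 0) := by
        intro S
        by_cases hSe : S = ∅ <;> simp [hSe]
      rw [Finset.sum_congr rfl fun S _ => h3 S, Finset.sum_sub_distrib,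
        Finset.sum_ite_eq' univ (∅ : Finset (Fin n))
          (fun S => (∑ k, xs k * ξ k) * ((n:ℝ) * P S))]
      simp only [Finset.mem_univ, if_true]
      rw [← Finset.mul_sum, ← Finset.mul_sum, hPsum, hPempty]
      ring
    have hcomm : ∑ k, ξ k * xs k = ∑ k, xs k * ξ k :=
      Finset.sum_congr rfl fun k _ => mul_comm _ _
    calc (1 - Yv ^ n) * ((n:ℝ) * ∑ k, ξ k * xs k)
        = (∑ k, xs k * ξ k) * ((n:ℝ) * (1 - Yv ^ n)) := by rw [hcomm]; ring
      _ = ∑ i, ∑ S : Finset (Fin n),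
            (if i ∈ S then ((S.card : ℝ))⁻¹ * ((∑ k, xs k * ξ k) * ((n:ℝ) * P S)) else 0) :=
          step2.symm
      _ ≤ ∑ i, ∑ S : Finset (Fin n), g S i *
            ((if i ∈ S then ∑ k, xs k * ξ k else ∑ k, ((n:ℝ) - 1) * ys k * ξ k) * Pe i S) :=
          Finset.sum_le_sum fun i _ => Finset.sum_le_sum fun S _ => step1 i S
      _ = senderUtil q ξ φ := hsu.symm
  refine ⟨φ, ⟨hφ0, hφsum⟩, hIC, hlow, ?_⟩
  intro ψ hψ hicψ
  obtain ⟨hψ0, hψsum⟩ := hψ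
  have hTpsi : ∀ (i j : Fin n) (F : Fin m → ℝ),
      ∑ k, signature q ψ i j k * F k = ∑ θ : Fin n → Fin m, prior q θ * ψ θ i * F (θ j) := by
    intro i j F
    simp only [IID.signature, Finset.sum_mul]
    rw [Finset.sum_comm]
    apply Finset.sum_congr rfl
    intro θ _
    simp only [ite_mul, zero_mul, Finset.sum_ite_eq, Finset.mem_univ, if_true]
  have hsig0 : ∀ i j k, 0 ≤ signature q ψ i j k := by
    intro i j k
    apply Finset.sum_nonneg
    intro θ _
    have hp : 0 ≤ prior q θ := Finset.prod_nonneg fun l _ => hq0 _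
    split
    · exact mul_nonneg hp (hψ0 θ i)
    · exact le_rfl
  have hsig_col : ∀ (j : Fin n) (k : Fin m), ∑ i, signature q ψ i j k = q k := by
    intro j k
    simp only [IID.signature]
    rw [Finset.sum_comm]
    have h1 : ∀ θ : Fin n → Fin m, (∑ i, if θ j = k then prior q θ * ψ θ i else 0)
        = prior q θ * (if θ j = k then 1 else 0) := by
      intro θ
      by_cases h : θ j = k
      · simp only [h, if_true, ← Finset.mul_sum, hψsum θ, mul_one]
      · simp [h]
    rw [Finset.sum_congr rfl fun θ _ => h1 θ,
      base_lemma q hq1 j (fun t => if t = k then 1 else 0)]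
    simp
  have hutil : senderUtil q ξ ψ = ∑ i, ∑ k, signature q ψ i i k * ξ k := by
    simp only [IID.senderUtil]
    rw [Finset.sum_comm]
    exact Finset.sum_congr rfl fun i _ => (hTpsi i i ξ).symm
  have hicsig : ∀ i j, ∑ k, signature q ψ i j k * ρ k ≤ ∑ k, signature q ψ i i k * ρ k := by
    intro i j
    rw [hTpsi i j ρ, hTpsi i i ρ]
    exact hicψ i j
  set x' : Fin m → ℝ := fun k => (∑ i, signature q ψ i i k) / n with hx'_def
  have hx'0 : ∀ k, 0 ≤ x' k := by
    intro k
    simp only [hx'_def]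
    exact div_nonneg (Finset.sum_nonneg fun i _ => hsig0 i i k) (le_of_lt hnR)
  have hx'q : ∀ k, x' k ≤ q k := by
    intro k
    have h1 : ∀ i : Fin n, signature q ψ i i k ≤ q k := by
      intro i
      rw [← hsig_col i k]
      exact Finset.single_le_sum (fun i' _ => hsig0 i' i k) (Finset.mem_univ i)
    have h2 : ∑ i, signature q ψ i i k ≤ (n:ℝ) * q k := by
      calc ∑ i, signature q ψ i i k ≤ ∑ _i : Fin n, q k := Finset.sum_le_sum fun i _ => h1 i
        _ = (n:ℝ) * q k := by
          rw [Finset.sum_const, Finset.card_univ, Fintype.card_fin, nsmul_eq_mul]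
    simp only [hx'_def]
    rw [div_le_iff₀ hnR]
    linarith
  have hj0 : (0:ℕ) < n := hn
  have hsigtot : ∀ i : Fin n, ∑ k, signature q ψ i i k = ∑ θ : Fin n → Fin m, prior q θ * ψ θ i := by
    intro i
    have := hTpsi i i (fun _ => 1)
    simpa using this
  have hx'sum : ∑ k, x' k = 1 / n := by
    have h1 : ∑ k, ∑ i, signature q ψ i i k = 1 := by
      rw [Finset.sum_comm]
      rw [Finset.sum_congr rfl fun i _ => hsigtot i]
      have h2 : ∑ i, ∑ θ : Fin n → Fin m, prior q θ * ψ θ i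
          = ∑ θ : Fin n → Fin m, prior q θ * 1 := by
        rw [Finset.sum_comm]
        apply Finset.sum_congr rfl
        intro θ _
        rw [← Finset.mul_sum, hψsum θ]
      rw [h2, base_lemma q hq1 ⟨0, hn⟩ (fun _ => 1)]
      simpa using hq1
    simp only [hx'_def]
    rw [← Finset.sum_div, h1]
  have hx'util : (n:ℝ) * ∑ k, ξ k * x' k = senderUtil q ξ ψ := by
    rw [hutil, Finset.sum_comm]
    rw [Finset.mul_sum]
    apply Finset.sum_congr rfl
    intro k _
    simp only [hx'_def]
    rw [← Finset.sum_mul]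
    field_simp
    try ring
  have hub : senderUtil q ξ ψ ≤ (n:ℝ) * ∑ k, ξ k * xs k := by
    by_cases hn1 : n = 1
    · subst hn1
      have hx'q_eq : ∀ k, x' k = q k := by
        intro k
        have h1 := hsig_col 0 k
        rw [Fin.sum_univ_one] at h1
        simp only [hx'_def, Fin.sum_univ_one]
        rw [h1]
        norm_num
      rw [← hx'util]
      exact hopt x' x' hx'0 hx'0 le_rfl
        (fun k => by rw [hx'q_eq k]; push_cast; ring) hx'sum
    · have hn1R' : (0:ℝ) < (n:ℝ) - 1 := by
        have : (1:ℝ) < (n:ℝ) := by exact_mod_cast (by omega : 1 < n)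
        linarith
      set y' : Fin m → ℝ := fun k => (q k - x' k) / ((n:ℝ) - 1) with hy'_def
      have hy'0 : ∀ k, 0 ≤ y' k := by
        intro k
        simp only [hy'_def]
        exact div_nonneg (by linarith [hx'q k]) (le_of_lt hn1R')
      have hfeas : ∀ k, x' k + ((n:ℝ) - 1) * y' k = q k := by
        intro k
        simp only [hy'_def]
        field_simp
        ring
      have hRq : ∑ k, ρ k * q k ≤ (n:ℝ) * ∑ k, ρ k * x' k := by
        have h1 : ∀ j : Fin n, ∑ k, ρ k * q k = ∑ i, ∑ k, signature q ψ i j k * ρ k := by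
          intro j
          rw [Finset.sum_comm]
          apply Finset.sum_congr rfl
          intro k _
          rw [← Finset.sum_mul, hsig_col j k]
          ring
        have h5 : ∑ i, ∑ k, signature q ψ i i k * ρ k = (n:ℝ) * ∑ k, ρ k * x' k := by
          rw [Finset.sum_comm, Finset.mul_sum]
          apply Finset.sum_congr rfl
          intro k _
          simp only [hx'_def]
          rw [← Finset.sum_mul]
          field_simp
          try ring
        have h2 : (n:ℝ) * ∑ k, ρ k * q k = ∑ j : Fin n, ∑ i, ∑ k, signature q ψ i j k * ρ k := by
          rw [Finset.sum_congr rfl fun j _ => (h1 j).symm, Finset.sum_const, Finset.card_univ,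
            Fintype.card_fin, nsmul_eq_mul]
        have h3 : ∑ j : Fin n, ∑ i, ∑ k, signature q ψ i j k * ρ k
            ≤ ∑ _j : Fin n, ∑ i, ∑ k, signature q ψ i i k * ρ k :=
          Finset.sum_le_sum fun j _ => Finset.sum_le_sum fun i _ => hicsig i j
        have h4 : ∑ _j : Fin n, ∑ i, ∑ k, signature q ψ i i k * ρ k
            = (n:ℝ) * ((n:ℝ) * ∑ k, ρ k * x' k) := by
          rw [Finset.sum_const, Finset.card_univ, Fintype.card_fin, nsmul_eq_mul, h5]
        have h6 : (n:ℝ) * ∑ k, ρ k * q k ≤ (n:ℝ) * ((n:ℝ) * ∑ k, ρ k * x' k) := by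
          rw [h2, ← h4]
          exact h3
        exact le_of_mul_le_mul_left h6 hnR
      have hicfeas : ∑ k, ρ k * y' k ≤ ∑ k, ρ k * x' k := by
        have h7 : ∀ k, ρ k * y' k = (ρ k * q k - ρ k * x' k) / ((n:ℝ) - 1) := by
          intro k
          simp only [hy'_def]
          field_simp
        rw [Finset.sum_congr rfl fun k _ => h7 k, ← Finset.sum_div, Finset.sum_sub_distrib,
          div_le_iff₀ hn1R']
        nlinarith [hRq]
      rw [← hx'util]
      exact hopt x' y' hx'0 hy'0 hicfeas hfeas hx'sum
  have hYexp : Yv ^ n ≤ 1 / Real.exp 1 := by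
    have h1 : Yv ≤ Real.exp (-(1 / (n:ℝ))) := by
      have h := Real.add_one_le_exp (-(1 / (n:ℝ)))
      rw [hY_def]
      linarith
    have h2 : Yv ^ n ≤ Real.exp (-(1 / (n:ℝ))) ^ n := pow_le_pow_left₀ hY0 h1 n
    have h3 : Real.exp (-(1 / (n:ℝ))) ^ n = Real.exp (-1) := by
      rw [← Real.exp_nat_mul]
      congr 1
      field_simp
    rw [h3, Real.exp_neg] at h2
    rw [one_div]
    exact h2
  have hcoef : (0:ℝ) ≤ 1 - 1 / Real.exp 1 := by
    have h2 : (2:ℝ) ≤ Real.exp 1 := by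
      have := Real.add_one_le_exp 1
      linarith
    have h3 : 1 / Real.exp 1 ≤ 1 := by
      rw [div_le_one (by linarith)]
      linarith
    linarith
  have hsu0 : 0 ≤ (n:ℝ) * ∑ k, ξ k * xs k :=
    mul_nonneg (le_of_lt hnR)
      (Finset.sum_nonneg fun k _ => mul_nonneg (hξ k) (hxs0 k))
  calc (1 - 1 / Real.exp 1) * senderUtil q ξ ψ
      ≤ (1 - 1 / Real.exp 1) * ((n:ℝ) * ∑ k, ξ k * xs k) :=
        mul_le_mul_of_nonneg_left hub hcoef
    _ ≤ (1 - Yv ^ n) * ((n:ℝ) * ∑ k, ξ k * xs k) :=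
        mul_le_mul_of_nonneg_right (by linarith [hYexp]) hsu0
    _ ≤ senderUtil q ξ φ := hlow
end

section
/- For any a ∈ ℝ^n, let θ be drawn uniformly at random from {−1,+1}^n. Then the maximum, over all functions φ : {−1,+1}^n → [0,1] with E_θ[φ(θ)] = 1/2, of the quantity Σ_{i=1}^n a_i (E[φ(θ)·1[θ_i=+1]] − E[φ(θ)·1[θ_i=−1]]) − Σ_{i=1}^n a_i (E[(1−φ(θ))·1[θ_i=+1]] − E[(1−φ(θ))·1[θ_i=−1]]), equals the Khintchine constant K(a) = E_θ[|θ·a|]. -/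
/-!
Writing `s θ = θ · a`, the objective of `φ` is `E[(2φ(θ) - 1) s(θ)]`, which is at most `E|s(θ)|`
since `|2φ - 1| ≤ 1`. Equality holds for `φ = (1 + sign s)/2`, and this `φ` has mean `1/2`
because `θ ↦ -θ` negates `s`, so that `E[sign s] = 0`.
-/

open Finset

section SignedSum

variable {ι : Type*} [Fintype ι]

/-- `θ · a` for `θ ∈ {-1, +1}^ι`, encoded as `ι → Bool` with `true ↦ +1`. -/
def signedSum (a : ι → ℝ) (θ : ι → Bool) : ℝ :=
  ∑ i, (if θ i then (1 : ℝ) else -1) * a i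

theorem signedSum_not (a : ι → ℝ) (θ : ι → Bool) :
    signedSum a (fun i => !θ i) = -signedSum a θ := by
  rw [signedSum, signedSum, ← sum_neg_distrib]
  refine sum_congr rfl fun i _ => ?_
  cases θ i <;> simp

theorem sum_sign_signedSum [DecidableEq ι] (a : ι → ℝ) :
    ∑ θ : ι → Bool, (SignType.sign (signedSum a θ) : ℝ) = 0 := by
  refine sum_ninvolution (fun θ i => !θ i) (fun θ => ?_) (fun θ hθ hfix => hθ ?_)
    (fun _ => mem_univ _) (fun θ => by simp)
  · rw [signedSum_not, Left.sign_neg, SignType.coe_neg, add_neg_cancel]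
  · have hzero : signedSum a θ = 0 := by
      have := signedSum_not a θ
      rw [hfix] at this
      linarith
    simp [hzero]

theorem two_signal_objective_eq [DecidableEq ι] (a : ι → ℝ) (c : ℝ) (φ : (ι → Bool) → ℝ) :
    (∑ i, a i *
        (c * (∑ θ : ι → Bool, φ θ * (if θ i then 1 else 0))
          - c * (∑ θ : ι → Bool, φ θ * (if θ i then 0 else 1))))
      - (∑ i, a i *
        (c * (∑ θ : ι → Bool, (1 - φ θ) * (if θ i then 1 else 0))
          - c * (∑ θ : ι → Bool, (1 - φ θ) * (if θ i then 0 else 1))))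
      = c * ∑ θ : ι → Bool, (2 * φ θ - 1) * signedSum a θ := by
  simp only [signedSum, mul_sum, mul_sub, ← sum_sub_distrib]
  rw [sum_comm]
  refine sum_congr rfl fun θ _ => sum_congr rfl fun i _ => ?_
  cases θ i <;> simp <;> ring

end SignedSum

theorem mul_le_abs_of_mem_Icc {t : ℝ} (ht : t ∈ Set.Icc (0 : ℝ) 1) (x : ℝ) :
    (2 * t - 1) * x ≤ |x| := by
  have h : |2 * t - 1| ≤ 1 := abs_le.mpr ⟨by linarith [ht.1], by linarith [ht.2]⟩
  calc (2 * t - 1) * x ≤ |2 * t - 1| * |x| := (le_abs_self _).trans (abs_mul _ _).le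
    _ ≤ |x| := mul_le_of_le_one_left (abs_nonneg x) h

theorem one_add_sign_div_two_mem_Icc (x : ℝ) :
    (1 + (SignType.sign x : ℝ)) / 2 ∈ Set.Icc (0 : ℝ) 1 := by
  rcases SignType.sign x with _ | _ | _ <;> norm_num

/-- for any `a ∈ ℝ^n`, with `θ` uniform on `{−1,+1}^n` (encoded as
`Fin n → Bool` with `true ↦ +1`, `false ↦ −1`), the maximum over all
`φ : {−1,+1}^n → [0,1]` with `E[φ] = 1/2` of
`Σᵢ aᵢ (E[φ·1[θᵢ=+1]] − E[φ·1[θᵢ=−1]]) − Σᵢ aᵢ (E[(1−φ)·1[θᵢ=+1]] − E[(1−φ)·1[θᵢ=−1]])`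
equals the Khintchine constant `K(a) = E[|θ·a|]`. -/
theorem khintchine_constant_as_lp
    {n : ℕ} (a : Fin n → ℝ) :
    IsGreatest
      {v : ℝ | ∃ φ : (Fin n → Bool) → ℝ,
        (∀ θ, φ θ ∈ Set.Icc (0 : ℝ) 1) ∧
        (1 / 2 ^ n : ℝ) * (∑ θ : Fin n → Bool, φ θ) = 1 / 2 ∧
        v = (∑ i, a i *
              ((1 / 2 ^ n : ℝ) * (∑ θ : Fin n → Bool, φ θ * (if θ i then 1 else 0))
               - (1 / 2 ^ n : ℝ) * (∑ θ : Fin n → Bool, φ θ * (if θ i then 0 else 1))))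
          - (∑ i, a i *
              ((1 / 2 ^ n : ℝ) * (∑ θ : Fin n → Bool, (1 - φ θ) * (if θ i then 1 else 0))
               - (1 / 2 ^ n : ℝ) * (∑ θ : Fin n → Bool, (1 - φ θ) * (if θ i then 0 else 1))))}
      ((1 / 2 ^ n : ℝ) * ∑ θ : Fin n → Bool, |∑ i, (if θ i then (1 : ℝ) else -1) * a i|) := by
  constructor
  · refine ⟨fun θ => (1 + (SignType.sign (signedSum a θ) : ℝ)) / 2,
      fun θ => one_add_sign_div_two_mem_Icc _, ?_, ?_⟩
    · rw [← sum_div, sum_add_distrib, sum_sign_signedSum]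
      simp [field]
    · rw [two_signal_objective_eq]
      refine congrArg _ (sum_congr rfl fun θ _ => ?_)
      change |signedSum a θ| = _
      rw [← sign_mul_self]
      ring
  · rintro v ⟨φ, hφ, -, rfl⟩
    rw [two_signal_objective_eq]
    gcongr with θ
    exact mul_le_abs_of_mem_Icc (hφ θ) _
end

section
/- Consider the persuasion instance with n+1 actions and states of nature θ ∈ {1,2}^n drawn from the uniform product prior (each coordinate independently equals 1 or 2 with probability 1/2): the special action 0 yields sender payoff ε > 0 and receiver payoff 0 in every state; for each regular action i ∈ [n], if θ_i = 1 it yields sender payoff −a_i and receiver payoff a_i, and if θ_i = 2 it yields sender payoff −b_i and receiver payoff b_i. Then there exists an optimal incentive-compatible direct signaling scheme that uses at most two signals with positive probability: one recommending the special action 0, and the other recommending a single fixed regular action. -/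
open Finset

namespace SpecialInstance

variable {n : ℕ}

/-- uniform prior on states `{1,2}^n`, encoded as `Fin n → Bool`
(`false` = type 1, `true` = type 2) -/
noncomputable def unif (n : ℕ) : (Fin n → Bool) → ℝ := fun _ => 1 / 2 ^ n

/-- receiver payoff: the special action `none` gives `0`; the regular action `some i`
gives `a i` on type 1 and `b i` on type 2 -/
def rcv (a b : Fin n → ℝ) (θ : Fin n → Bool) : Option (Fin n) → ℝ
  | none => 0
  | some i => if θ i then b i else a i

/-- sender payoff: the special action `none` gives `ε`; regular actions are zero-sum
with the receiver -/
def snd (a b : Fin n → ℝ) (ε : ℝ) (θ : Fin n → Bool) : Option (Fin n) → ℝ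
  | none => ε
  | some i => -(if θ i then b i else a i)

/-- a direct signaling scheme: a distribution over signals (one per action)
for each state -/
def IsScheme (φ : (Fin n → Bool) → Option (Fin n) → ℝ) : Prop :=
  (∀ θ o, 0 ≤ φ θ o) ∧ ∀ θ, ∑ o : Option (Fin n), φ θ o = 1

/-- incentive compatibility -/
def IC (a b : Fin n → ℝ) (φ : (Fin n → Bool) → Option (Fin n) → ℝ) : Prop :=
  ∀ o o' : Option (Fin n),
    ∑ θ : Fin n → Bool, unif n θ * φ θ o * rcv a b θ o' ≤
      ∑ θ : Fin n → Bool, unif n θ * φ θ o * rcv a b θ o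

/-- expected sender utility -/
noncomputable def senderUtil (a b : Fin n → ℝ) (ε : ℝ)
    (φ : (Fin n → Bool) → Option (Fin n) → ℝ) : ℝ :=
  ∑ θ : Fin n → Bool, ∑ o : Option (Fin n), unif n θ * φ θ o * snd a b ε θ o

end SpecialInstance

open SpecialInstance

namespace SpecialInstance

lemma sum_unif (n : ℕ) : ∑ θ : Fin n → Bool, unif n θ = 1 := by
  simp [unif, Finset.sum_const, Fintype.card_fun]

lemma sum_eval {n : ℕ} (j : Fin n) (g : Bool → ℝ) :
    ∑ θ : Fin n → Bool, g (θ j) = 2 ^ n * (g false + g true) / 2 := by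
  have hinv : Function.Involutive (fun θ : Fin n → Bool => Function.update θ j (!θ j)) := by
    intro θ; funext x
    rcases eq_or_ne x j with rfl | hx
    · simp
    · simp [Function.update_of_ne hx]
  have h1 : ∑ θ : Fin n → Bool, g (θ j) = ∑ θ : Fin n → Bool, g (!θ j) :=
    Fintype.sum_bijective _ hinv.bijective _ _ (fun θ => by simp)
  have h2 : (2:ℝ) * ∑ θ : Fin n → Bool, g (θ j)
      = ∑ θ : Fin n → Bool, (g (θ j) + g (!θ j)) := by
    rw [Finset.sum_add_distrib, ← h1]; ring
  have h3 : ∑ θ : Fin n → Bool, (g (θ j) + g (!θ j))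
      = 2 ^ n * (g false + g true) := by
    have h4 : ∀ θ : Fin n → Bool, g (θ j) + g (!θ j) = g false + g true := by
      intro θ; cases h : θ j <;> simp [h, add_comm]
    rw [Finset.sum_congr rfl fun θ _ => h4 θ]
    simp [Finset.sum_const, Fintype.card_fun]
    ring
  linarith

lemma sum_unif_mul {n : ℕ} (j : Fin n) (va vb : ℝ) :
    ∑ θ : Fin n → Bool, unif n θ * (if θ j then vb else va) = (va + vb) / 2 := by
  have h := sum_eval j (fun c => (1 / 2 ^ n : ℝ) * (if c then vb else va))
  simp only [unif]
  rw [h]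
  have h2 : (2:ℝ)^n ≠ 0 := by positivity
  field_simp
  simp





lemma exists_ic {n : ℕ} (a b : Fin n → ℝ) :
    ∃ φ : (Fin n → Bool) → Option (Fin n) → ℝ, IsScheme φ ∧ IC a b φ := by
  have hbr : ∀ θ : Fin n → Bool, ∃ o : Option (Fin n), ∀ o', rcv a b θ o' ≤ rcv a b θ o := by
    intro θ
    obtain ⟨o, -, ho⟩ := Finset.exists_max_image Finset.univ (rcv a b θ) ⟨none, Finset.mem_univ _⟩
    exact ⟨o, fun o' => ho o' (Finset.mem_univ _)⟩
  choose br hbr using hbr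
  refine ⟨fun θ o => if o = br θ then 1 else 0, ⟨fun θ o => by positivity, fun θ => by simp⟩, ?_⟩
  intro o o'
  refine Finset.sum_le_sum fun θ _ => ?_
  rcases eq_or_ne o (br θ) with h | h
  · simp only [h, if_pos rfl]
    have hu : (0:ℝ) ≤ unif n θ * 1 := by simp [unif]
    exact mul_le_mul_of_nonneg_left (hbr θ o') hu
  · simp [h]


lemma exists_optimal {n : ℕ} (a b : Fin n → ℝ) (ε : ℝ) :
    ∃ φ : (Fin n → Bool) → Option (Fin n) → ℝ, (IsScheme φ ∧ IC a b φ) ∧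
      ∀ ψ, IsScheme ψ → IC a b ψ → senderUtil a b ε ψ ≤ senderUtil a b ε φ := by
  classical
  set S : Set ((Fin n → Bool) → Option (Fin n) → ℝ) := {φ | IsScheme φ ∧ IC a b φ} with hS
  have hne : S.Nonempty := exists_ic a b
  have c1 : ∀ (θ : Fin n → Bool) (o : Option (Fin n)),
      Continuous fun φ : (Fin n → Bool) → Option (Fin n) → ℝ => φ θ o :=
    fun θ o => (continuous_apply o).comp (continuous_apply θ)
  have hsub : S ⊆ Set.univ.pi fun _ : Fin n → Bool =>
      Set.univ.pi fun _ : Option (Fin n) => Set.Icc (0:ℝ) 1 := by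
    rintro φ ⟨⟨h0, h1⟩, -⟩ θ _
    intro o _
    refine ⟨h0 θ o, ?_⟩
    rw [← h1 θ]
    exact Finset.single_le_sum (fun o' _ => h0 θ o') (Finset.mem_univ o)
  have hK : IsCompact (Set.univ.pi fun _ : Fin n → Bool =>
      Set.univ.pi fun _ : Option (Fin n) => Set.Icc (0:ℝ) 1) :=
    isCompact_univ_pi fun _ => isCompact_univ_pi fun _ => isCompact_Icc
  have hclosed : IsClosed S := by
    have hrw : S = (⋂ θ : Fin n → Bool, ⋂ o : Option (Fin n), {φ : (Fin n → Bool) → Option (Fin n) → ℝ | 0 ≤ φ θ o}) ∩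
        ((⋂ θ : Fin n → Bool, {φ : (Fin n → Bool) → Option (Fin n) → ℝ | ∑ o : Option (Fin n), φ θ o = 1}) ∩
          (⋂ o : Option (Fin n), ⋂ o' : Option (Fin n),
            {φ : (Fin n → Bool) → Option (Fin n) → ℝ |
              ∑ θ : Fin n → Bool, unif n θ * φ θ o * rcv a b θ o' ≤
                ∑ θ : Fin n → Bool, unif n θ * φ θ o * rcv a b θ o})) := by
      ext φ
      simp only [hS, Set.mem_setOf_eq, Set.mem_inter_iff, Set.mem_iInter, IsScheme, IC]
      tauto
    rw [hrw]
    refine IsClosed.inter ?_ (IsClosed.inter ?_ ?_)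
    · exact isClosed_iInter fun θ => isClosed_iInter fun o =>
        isClosed_le continuous_const (c1 θ o)
    · exact isClosed_iInter fun θ => isClosed_eq
        (continuous_finset_sum _ fun o _ => c1 θ o) continuous_const
    · refine isClosed_iInter fun o => isClosed_iInter fun o' => isClosed_le ?_ ?_
      · exact continuous_finset_sum _ fun θ _ => (continuous_const.mul (c1 θ o)).mul continuous_const
      · exact continuous_finset_sum _ fun θ _ => (continuous_const.mul (c1 θ o)).mul continuous_const
  have hcompact : IsCompact S := hK.of_isClosed_subset hclosed hsub
  have hcont : Continuous (senderUtil a b ε (n := n)) := by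
    unfold senderUtil
    exact continuous_finset_sum _ fun θ _ => continuous_finset_sum _ fun o _ =>
      (continuous_const.mul (c1 θ o)).mul continuous_const
  obtain ⟨φ, hφS, hmax⟩ := hcompact.exists_isMaxOn hne hcont.continuousOn
  exact ⟨φ, hφS, fun ψ h1 h2 => hmax ⟨h1, h2⟩⟩


end SpecialInstance

open SpecialInstance

/-- in the instance with one special action (sender payoff `ε > 0`,
receiver payoff `0`) and `n` zero-sum regular actions over the uniform prior on
`{1,2}^n`, some optimal incentive-compatible direct scheme uses at most two signals
with positive probability: one recommending the special action and one recommending a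
single fixed regular action. -/
theorem optimal_scheme_uses_two_signals
    {n : ℕ} (hn : 0 < n) (a b : Fin n → ℝ) (ε : ℝ) (hε : 0 < ε) :
    ∃ φ : (Fin n → Bool) → Option (Fin n) → ℝ,
      IsScheme φ ∧ IC a b φ ∧
      (∀ ψ : (Fin n → Bool) → Option (Fin n) → ℝ,
        IsScheme ψ → IC a b ψ → senderUtil a b ε ψ ≤ senderUtil a b ε φ) ∧
      ∃ i0 : Fin n, ∀ θ, ∀ j : Fin n, j ≠ i0 → φ θ (some j) = 0 := by
  classical
  have hu0 : ∀ θ : Fin n → Bool, (0:ℝ) ≤ unif n θ := by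
    intro θ; simp [unif]
  have util_eq : ∀ χ : (Fin n → Bool) → Option (Fin n) → ℝ,
      senderUtil a b ε χ = (∑ θ : Fin n → Bool, unif n θ * χ θ none * ε)
        + ∑ i : Fin n, ∑ θ : Fin n → Bool,
            unif n θ * χ θ (some i) * (-(if θ i then b i else a i)) := by
    intro χ
    simp only [senderUtil, Fintype.sum_option, snd]
    rw [Finset.sum_add_distrib, Finset.sum_comm]
  -- for any IC scheme, the conditional value of each recommended action is ≥ 0
  have hGnn : ∀ χ, IC a b χ → ∀ i : Fin n,
      0 ≤ ∑ θ : Fin n → Bool, unif n θ * χ θ (some i) * (if θ i then b i else a i) := by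
    intro χ hIC i
    have h := hIC (some i) none
    simpa [rcv] using h
  by_cases hpos : ∃ j : Fin n, 0 < a j + b j
  · -- some action has positive expected receiver value
    obtain ⟨φ, ⟨⟨hpos0, hsum⟩, hIC⟩, hmax⟩ := exists_optimal a b ε
    set ψf : (Fin n → Bool) → ℝ := fun θ => ∑ i : Fin n, φ θ (some i) with hψf
    have hψ0 : ∀ θ, 0 ≤ ψf θ := fun θ => Finset.sum_nonneg fun i _ => hpos0 θ (some i)
    have hsumθ : ∀ θ, φ θ none + ψf θ = 1 := by
      intro θ; rw [← hsum θ, Fintype.sum_option]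
    set F : Fin n → ℝ := fun i =>
      ∑ θ : Fin n → Bool, unif n θ * ψf θ * (if θ i then b i else a i) with hF
    obtain ⟨j0, hj0⟩ := hpos
    obtain ⟨i0, -, hi0⟩ := Finset.exists_max_image Finset.univ F ⟨j0, Finset.mem_univ _⟩
    have hi0' : ∀ i : Fin n, F i ≤ F i0 := fun i => hi0 i (Finset.mem_univ _)
    -- positivity of F i0
    have hICnone : ∀ j : Fin n,
        ∑ θ : Fin n → Bool, unif n θ * φ θ none * (if θ j then b j else a j) ≤ 0 := by
      intro j
      have h := hIC none (some j)
      simpa [rcv] using h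
    have hFj0 : 0 < F j0 := by
      have e1 : F j0 = (∑ θ : Fin n → Bool, unif n θ * (if θ j0 then b j0 else a j0))
          - ∑ θ : Fin n → Bool, unif n θ * φ θ none * (if θ j0 then b j0 else a j0) := by
        rw [hF, ← Finset.sum_sub_distrib]
        refine Finset.sum_congr rfl fun θ _ => ?_
        have h1 : ψf θ = 1 - φ θ none := by have := hsumθ θ; linarith
        rw [h1]; ring
      rw [e1, sum_unif_mul]
      have := hICnone j0
      linarith
    have hFi0 : 0 ≤ F i0 := le_trans hFj0.le (hi0' j0)
    refine ⟨fun θ o => Option.elim o (φ θ none) (fun j => if j = i0 then ψf θ else 0),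
      ⟨?_, ?_⟩, ?_, ?_, ⟨i0, ?_⟩⟩
    · -- nonneg
      intro θ o
      cases o with
      | none => exact hpos0 θ none
      | some j =>
        simp only [Option.elim_some]
        split
        · exact hψ0 θ
        · exact le_refl 0
    · -- sums to one
      intro θ
      rw [Fintype.sum_option]
      simp only [Option.elim_none, Option.elim_some]
      rw [Finset.sum_ite_eq' Finset.univ i0 (fun _ => ψf θ)]
      simp [hsumθ θ]
    · -- IC
      intro o o'
      cases o with
      | none =>
        simpa only [Option.elim_none] using hIC none o'
      | some j =>
        rcases eq_or_ne j i0 with h | hj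
        · have e1 : ∀ o' : Option (Fin n),
              (∑ θ : Fin n → Bool, unif n θ * (Option.elim (some j) (φ θ none)
                (fun j' => if j' = i0 then ψf θ else 0)) * rcv a b θ o')
              = ∑ θ : Fin n → Bool, unif n θ * ψf θ * rcv a b θ o' := by
            intro o'
            refine Finset.sum_congr rfl fun θ _ => ?_
            simp [h]
          rw [e1 o', e1 (some j)]
          cases o' with
          | none =>
            have e2 : (∑ θ : Fin n → Bool, unif n θ * ψf θ * rcv a b θ none) = 0 := by
              refine Finset.sum_eq_zero fun θ _ => ?_
              simp [rcv]
            have e3 : (∑ θ : Fin n → Bool, unif n θ * ψf θ * rcv a b θ (some j)) = F j := by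
              refine Finset.sum_congr rfl fun θ _ => ?_
              simp [rcv, hF]
            rw [e2, e3, h]
            exact hFi0
          | some j' =>
            have e3 : ∀ k : Fin n, (∑ θ : Fin n → Bool,
                unif n θ * ψf θ * rcv a b θ (some k)) = F k := by
              intro k
              refine Finset.sum_congr rfl fun θ _ => ?_
              simp [rcv, hF]
            rw [e3 j', e3 j, h]
            exact hi0' j'
        · simp [Option.elim_some, hj]
    · -- optimality
      intro χ hχS hχIC
      refine le_trans (hmax χ hχS hχIC) ?_
      rw [util_eq, util_eq]
      simp only [Option.elim_none, Option.elim_some]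
      have hr : ∀ i : Fin n, (∑ θ : Fin n → Bool,
          unif n θ * (if i = i0 then ψf θ else 0) * (-(if θ i then b i else a i)))
          = if i = i0 then -F i0 else 0 := by
        intro i
        rcases eq_or_ne i i0 with h | hi
        · rw [if_pos h]
          have e : ∀ θ : Fin n → Bool,
              unif n θ * (if i = i0 then ψf θ else 0) * (-(if θ i then b i else a i))
              = -(unif n θ * ψf θ * (if θ i0 then b i0 else a i0)) := by
            intro θ
            rw [if_pos h, h]
            ring
          rw [Finset.sum_congr rfl fun θ _ => e θ]
          rw [← Finset.sum_neg_distrib]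
        · simp [hi]
      rw [Finset.sum_congr rfl fun i _ => hr i, Finset.sum_ite_eq' Finset.univ i0]
      simp only [Finset.mem_univ, if_pos]
      -- suffices : sum of G_i ≥ F i0
      have key : F i0 ≤ ∑ i : Fin n, ∑ θ : Fin n → Bool,
          unif n θ * φ θ (some i) * (if θ i then b i else a i) := by
        have e2 : F i0 = ∑ i : Fin n, ∑ θ : Fin n → Bool,
            unif n θ * φ θ (some i) * (if θ i0 then b i0 else a i0) := by
          rw [hF, Finset.sum_comm]
          refine Finset.sum_congr rfl fun θ _ => ?_
          rw [hψf]
          simp only [Finset.sum_mul, Finset.mul_sum]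
        rw [e2]
        refine Finset.sum_le_sum fun i _ => ?_
        have h := hIC (some i) (some i0)
        simpa [rcv] using h
      have e3 : ∑ i : Fin n, ∑ θ : Fin n → Bool,
          unif n θ * φ θ (some i) * (-(if θ i then b i else a i))
          = -∑ i : Fin n, ∑ θ : Fin n → Bool,
              unif n θ * φ θ (some i) * (if θ i then b i else a i) := by
        rw [← Finset.sum_neg_distrib]
        refine Finset.sum_congr rfl fun i _ => ?_
        rw [← Finset.sum_neg_distrib]
        exact Finset.sum_congr rfl fun θ _ => by ring
      rw [e3]
      linarith
    · -- support
      intro θ j hj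
      simp [Option.elim_some, hj]
  · -- all actions have nonpositive expected receiver value: always recommend none
    push_neg at hpos
    refine ⟨fun _ o => if o = none then 1 else 0, ⟨?_, ?_⟩, ?_, ?_, ⟨⟨0, hn⟩, ?_⟩⟩
    · intro θ o; positivity
    · intro θ; simp
    · intro o o'
      cases o with
      | some j => simp
      | none =>
        cases o' with
        | none => exact le_refl _
        | some j =>
          have e1 : (∑ θ : Fin n → Bool, unif n θ * (if (none : Option (Fin n)) = none
                then (1:ℝ) else 0) * rcv a b θ (some j))
              = ∑ θ : Fin n → Bool, unif n θ * (if θ j then b j else a j) := by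
            refine Finset.sum_congr rfl fun θ _ => ?_
            simp [rcv]
          have e2 : (∑ θ : Fin n → Bool, unif n θ * (if (none : Option (Fin n)) = none
                then (1:ℝ) else 0) * rcv a b θ none) = 0 := by
            refine Finset.sum_eq_zero fun θ _ => ?_
            simp [rcv]
          rw [e1, e2, sum_unif_mul j (a j) (b j)]
          linarith [hpos j]
    · intro χ hχS hχIC
      rw [util_eq, util_eq]
      simp only [if_pos rfl, reduceIte]
      have hone : ∀ i : Fin n, (∑ θ : Fin n → Bool,
          unif n θ * (if (some i : Option (Fin n)) = none then (1:ℝ) else 0)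
            * (-(if θ i then b i else a i))) = 0 := by
        intro i; simp
      rw [Finset.sum_congr rfl fun i _ => hone i]
      simp only [Finset.sum_const_zero, add_zero]
      have h1 : ∑ θ : Fin n → Bool, unif n θ * (1:ℝ) * ε = ε := by
        have : ∑ θ : Fin n → Bool, unif n θ * (1:ℝ) * ε
            = (∑ θ : Fin n → Bool, unif n θ) * ε := by
          rw [Finset.sum_mul]
          exact Finset.sum_congr rfl fun θ _ => by ring
        rw [this, sum_unif, one_mul]
      rw [h1]
      have h2 : ∑ θ : Fin n → Bool, unif n θ * χ θ none * ε ≤ ε := by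
        have hle : ∀ θ : Fin n → Bool, unif n θ * χ θ none * ε ≤ unif n θ * 1 * ε := by
          intro θ
          have hχ1 : χ θ none ≤ 1 := by
            rw [← hχS.2 θ]
            exact Finset.single_le_sum (fun o _ => hχS.1 θ o) (Finset.mem_univ none)
          have := mul_le_mul_of_nonneg_left hχ1 (hu0 θ)
          nlinarith [hu0 θ, hε.le]
        calc ∑ θ : Fin n → Bool, unif n θ * χ θ none * ε
            ≤ ∑ θ : Fin n → Bool, unif n θ * 1 * ε := Finset.sum_le_sum fun θ _ => hle θ
        _ = ε := h1
      have h3 : ∑ i : Fin n, ∑ θ : Fin n → Bool,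
          unif n θ * χ θ (some i) * (-(if θ i then b i else a i)) ≤ 0 := by
        refine Finset.sum_nonpos fun i _ => ?_
        have := hGnn χ hχIC i
        have e : ∑ θ : Fin n → Bool, unif n θ * χ θ (some i) * (-(if θ i then b i else a i))
            = -∑ θ : Fin n → Bool, unif n θ * χ θ (some i) * (if θ i then b i else a i) := by
          rw [← Finset.sum_neg_distrib]
          exact Finset.sum_congr rfl fun θ _ => by ring
        rw [e]; linarith
      linarith
    · intro θ j hj; simp
end

section
/- In the persuasion instance with special action 0 (sender payoff ε > 0, receiver payoff 0) and regular actions i ∈ [n] (state θ ∈ {1,2}^n uniform product prior; type θ_i=1 gives sender −a_i, receiver a_i; type θ_i=2 gives sender −b_i, receiver b_i), assume a_i + b_i = 1 for every i. Fix any incentive-compatible direct scheme using two signals: σ_+ recommending action 0 and σ_− recommending some regular action. Then the sender's expected payoff from signal σ_− (the probability α_− of σ_− times the sender's conditional expected payoff given σ_−) is at most −1/2. Moreover, if it equals −1/2 exactly, then for every regular action i, both the sender's and the receiver's expected payoff from action i in signal σ_+ (the probability α_+ of σ_+ times the conditional expected payoff of action i given σ_+) equal 0. -/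
/-!
The two signals split every state, so for each regular action `i` the receiver's payoffs from
`i` in `σ₊` and in `σ₋` add up to its prior payoff `(a i + b i) / 2 = 1 / 2`. Incentive
compatibility in `σ₊` makes the first summand `≤ 0` (the special action pays the receiver `0`),
so the receiver gets at least `1 / 2` from `i0` in `σ₋`, and the zero-sum sender at most `-1/2`.
At equality, incentive compatibility in `σ₋` bounds the `σ₋`-payoff of every `i` by `1 / 2`,
which forces the `σ₊`-payoff of `i` to be `≥ 0`, hence `0`.
-/


open Finset

open SpecialInstance

namespace SpecialInstance

variable {n : ℕ}

theorem sum_unif_mul_apply_coord (i : Fin n) (g : Bool → ℝ) :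
    ∑ θ : Fin n → Bool, unif n θ * g (θ i) = (g false + g true) / 2 := by
  classical
  have hflip : Function.Involutive fun θ : Fin n → Bool => Function.update θ i (!θ i) := by
    intro θ; funext j; by_cases h : j = i <;> simp [h]
  have hsymm : ∑ θ : Fin n → Bool, g (θ i) = ∑ θ : Fin n → Bool, g (!θ i) :=
    Fintype.sum_equiv hflip.toPerm _ _ fun θ => by simp [Function.Involutive.toPerm]
  have hpair : ∀ θ : Fin n → Bool, g (θ i) + g (!θ i) = g false + g true := by
    intro θ; cases θ i <;> simp [add_comm]
  have htwice : 2 * ∑ θ : Fin n → Bool, g (θ i) = 2 ^ n * (g false + g true) := by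
    calc 2 * ∑ θ : Fin n → Bool, g (θ i)
        = ∑ θ : Fin n → Bool, (g (θ i) + g (!θ i)) := by rw [sum_add_distrib, ← hsymm]; ring
      _ = 2 ^ n * (g false + g true) := by simp [hpair, mul_add]
  simp only [unif, ← mul_sum]
  field_simp
  linarith

theorem sum_unif_mul_rcv_some (a b : Fin n → ℝ) (i : Fin n) :
    ∑ θ : Fin n → Bool, unif n θ * rcv a b θ (some i) = (a i + b i) / 2 :=
  sum_unif_mul_apply_coord i fun t => if t then b i else a i

theorem sum_mul_snd_some_eq_neg (a b : Fin n → ℝ) (ε : ℝ) (w : (Fin n → Bool) → ℝ) (i : Fin n) :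
    ∑ θ : Fin n → Bool, w θ * snd a b ε θ (some i) =
      -∑ θ : Fin n → Bool, w θ * rcv a b θ (some i) := by
  simp [snd, rcv, ← sum_neg_distrib]

theorem IC.sum_none_mul_rcv_some_nonpos {a b : Fin n → ℝ}
    {φ : (Fin n → Bool) → Option (Fin n) → ℝ} (hIC : IC a b φ) (i : Fin n) :
    ∑ θ : Fin n → Bool, unif n θ * φ θ none * rcv a b θ (some i) ≤ 0 := by
  simpa [rcv] using hIC none (some i)

theorem sum_unif_mul_add_of_two_signals {φ : (Fin n → Bool) → Option (Fin n) → ℝ}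
    (hφ : ∀ θ, ∑ o : Option (Fin n), φ θ o = 1) {i0 : Fin n}
    (hsupp : ∀ θ, ∀ j : Fin n, j ≠ i0 → φ θ (some j) = 0) (u : (Fin n → Bool) → ℝ) :
    ∑ θ : Fin n → Bool, unif n θ * φ θ none * u θ +
        ∑ θ : Fin n → Bool, unif n θ * φ θ (some i0) * u θ =
      ∑ θ : Fin n → Bool, unif n θ * u θ := by
  have hsplit : ∀ θ, φ θ none + φ θ (some i0) = 1 := by
    intro θ
    rw [← hφ θ, Fintype.sum_option, sum_eq_single i0 (fun j _ hj => hsupp θ j hj) (by simp)]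
  rw [← sum_add_distrib]
  refine sum_congr rfl fun θ _ => ?_
  linear_combination unif n θ * u θ * hsplit θ

end SpecialInstance

theorem sender_payoff_from_sigma_minus_general
    {n : ℕ} (a b : Fin n → ℝ) (hab : ∀ i, a i + b i = 1)
    (ε : ℝ) (i0 : Fin n)
    (φ : (Fin n → Bool) → Option (Fin n) → ℝ)
    (hφ : IsScheme φ)
    -- only the two signals `none` and `some i0` are used:
    (hsupp : ∀ θ, ∀ j : Fin n, j ≠ i0 → φ θ (some j) = 0)
    (hIC : IC a b φ) :
    (∑ θ : Fin n → Bool, unif n θ * φ θ (some i0) * snd a b ε θ (some i0)) ≤ -(1/2) ∧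
    ((∑ θ : Fin n → Bool, unif n θ * φ θ (some i0) * snd a b ε θ (some i0)) = -(1/2) →
      ∀ i : Fin n,
        (∑ θ : Fin n → Bool, unif n θ * φ θ none * rcv a b θ (some i)) = 0 ∧
        (∑ θ : Fin n → Bool, unif n θ * φ θ none * snd a b ε θ (some i)) = 0) := by
  have htotal : ∀ i : Fin n,
      ∑ θ : Fin n → Bool, unif n θ * φ θ none * rcv a b θ (some i) +
        ∑ θ : Fin n → Bool, unif n θ * φ θ (some i0) * rcv a b θ (some i) = 1 / 2 := fun i => by
    rw [sum_unif_mul_add_of_two_signals hφ.2 hsupp, sum_unif_mul_rcv_some, hab]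
  simp only [sum_mul_snd_some_eq_neg]
  refine ⟨by linarith [htotal i0, hIC.sum_none_mul_rcv_some_nonpos i0], fun hminus i => ?_⟩
  have hzero : ∑ θ : Fin n → Bool, unif n θ * φ θ none * rcv a b θ (some i) = 0 := by
    linarith [htotal i0, htotal i, hIC.sum_none_mul_rcv_some_nonpos i, hIC (some i0) (some i)]
  exact ⟨hzero, by rw [hzero, neg_zero]⟩

/-- in the special-action instance with `a i + b i = 1` for all `i`,
fix an incentive-compatible two-signal scheme: the signal `none` (`σ₊`) recommends the
special action and the signal `some i0` (`σ₋`) recommends the fixed regular action `i0`.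
Then the sender's expected payoff from `σ₋` is at most `−1/2`; and if it equals `−1/2`,
then for every regular action `i` both the sender's and the receiver's expected payoff
from action `i` in signal `σ₊` equal `0`. -/
theorem sender_payoff_from_sigma_minus
    {n : ℕ} (a b : Fin n → ℝ) (hab : ∀ i, a i + b i = 1)
    (ε : ℝ) (hε : 0 < ε) (i0 : Fin n)
    (φ : (Fin n → Bool) → Option (Fin n) → ℝ)
    (hφ : IsScheme φ)
    -- only the two signals `none` and `some i0` are used:
    (hsupp : ∀ θ, ∀ j : Fin n, j ≠ i0 → φ θ (some j) = 0)
    (hIC : IC a b φ) :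
    (∑ θ : Fin n → Bool, unif n θ * φ θ (some i0) * snd a b ε θ (some i0)) ≤ -(1/2) ∧
    ((∑ θ : Fin n → Bool, unif n θ * φ θ (some i0) * snd a b ε θ (some i0)) = -(1/2) →
      ∀ i : Fin n,
        (∑ θ : Fin n → Bool, unif n θ * φ θ none * rcv a b θ (some i)) = 0 ∧
        (∑ θ : Fin n → Bool, unif n θ * φ θ none * snd a b ε θ (some i)) = 0) :=
  sender_payoff_from_sigma_minus_general a b hab ε i0 φ hφ hsupp hIC
end

section
/- Let x ∈ (0, 1/2)^n with x_i ≠ 1/4 for all i, and for each i let (a_i, b_i) be the unique solution of x_i a_i + (1/2 − x_i) b_i = 0 and (1/2 − x_i) a_i + x_i b_i = 1/2. Then there exists ε₀ > 0 such that for all ε ∈ (0, ε₀], in the persuasion instance with special action 0 (sender payoff ε, receiver payoff 0) and regular actions i ∈ [n] (state θ ∈ {1,2}^n uniform product prior; type θ_i=1 gives sender −a_i, receiver a_i; type θ_i=2 gives sender −b_i, receiver b_i), the maximum expected sender utility over incentive-compatible direct schemes is at least (ε − 1)/2 if and only if M(x) ∈ K(n). -/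
open Finset

open SpecialInstance

namespace SpecialInstance

/-- `M(x) ∈ K(n)`: membership of the two-signal signature `M(x)`
(`M⁺_{i,1} = M⁻_{i,2} = x i`, `M⁺_{i,2} = M⁻_{i,1} = 1/2 − x i`) in the Khintchine
polytope: there is a two-signal scheme `ψ` over the uniform prior on `{1,2}^n`
(`ψ θ` = probability of the first signal in state `θ`) sending each signal with overall
probability `1/2` and realizing `M(x)` as its two-signal signature. -/
def MemKhintchine {n : ℕ} (x : Fin n → ℝ) : Prop :=
  ∃ ψ : (Fin n → Bool) → ℝ,
    (∀ θ, 0 ≤ ψ θ ∧ ψ θ ≤ 1) ∧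
    (1 / 2 ^ n : ℝ) * (∑ θ : Fin n → Bool, ψ θ) = 1 / 2 ∧
    ∀ i : Fin n,
      (1 / 2 ^ n : ℝ) * (∑ θ : Fin n → Bool, if θ i then 0 else ψ θ) = x i ∧
      (1 / 2 ^ n : ℝ) * (∑ θ : Fin n → Bool, if θ i then ψ θ else 0) = 1 / 2 - x i ∧
      (1 / 2 ^ n : ℝ) * (∑ θ : Fin n → Bool, if θ i then 0 else 1 - ψ θ) = 1 / 2 - x i ∧
      (1 / 2 ^ n : ℝ) * (∑ θ : Fin n → Bool, if θ i then 1 - ψ θ else 0) = x i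

end SpecialInstance

namespace SpecialInstance

-- ## auxiliary lemmas


def flipP (i : Fin n) : Equiv.Perm (Fin n → Bool) :=
  Function.Involutive.toPerm (fun θ => Function.update θ i (!(θ i))) (by
    intro θ; funext j
    rcases eq_or_ne j i with rfl | h
    · simp
    · simp [Function.update_of_ne h])

@[simp] lemma flipP_apply_same (i : Fin n) (θ : Fin n → Bool) : flipP i θ i = !(θ i) := by
  show Function.update θ i (!(θ i)) i = !(θ i)
  simp

lemma flipP_apply_ne (i j : Fin n) (θ : Fin n → Bool) (h : j ≠ i) : flipP i θ j = θ j := by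
  show Function.update θ i (!(θ i)) j = θ j
  simp [Function.update_of_ne h]

@[simp] lemma flipP_flipP (i : Fin n) (θ : Fin n → Bool) : flipP i (flipP i θ) = θ :=
  (Function.Involutive.toPerm _ _).left_inv θ

lemma sum_flip (i : Fin n) (g : (Fin n → Bool) → ℝ) :
    ∑ θ : Fin n → Bool, g (flipP i θ) = ∑ θ : Fin n → Bool, g θ :=
  Equiv.sum_comp (flipP i) g

lemma sum_flip_if_same (i : Fin n) (f : (Fin n → Bool) → ℝ) :
    ∑ θ : Fin n → Bool, (if θ i then (0:ℝ) else f (flipP i θ))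
      = ∑ θ : Fin n → Bool, (if θ i then f θ else 0) := by
  rw [← sum_flip i (fun θ => if θ i then (0:ℝ) else f (flipP i θ))]
  refine Finset.sum_congr rfl fun θ _ => ?_
  rcases h : θ i with _ | _ <;> simp [h]

lemma sum_flip_if_ne (i j : Fin n) (h : j ≠ i) (f : (Fin n → Bool) → ℝ) :
    ∑ θ : Fin n → Bool, (if θ i then (0:ℝ) else f (flipP j θ))
      = ∑ θ : Fin n → Bool, (if θ i then 0 else f θ) := by
  rw [← sum_flip j (fun θ => if θ i then (0:ℝ) else f (flipP j θ))]
  refine Finset.sum_congr rfl fun θ _ => ?_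
  rw [flipP_apply_ne j i θ (Ne.symm h), flipP_flipP]

lemma sum_if_one (i : Fin n) :
    ∑ θ : Fin n → Bool, (if θ i then (1:ℝ) else 0) = 2 ^ n / 2 := by
  have h1 : ∑ θ : Fin n → Bool, (if θ i then (1:ℝ) else 0)
      = ∑ θ : Fin n → Bool, (if θ i then (0:ℝ) else 1) := by
    rw [← sum_flip i (fun θ => if θ i then (0:ℝ) else 1)]
    refine Finset.sum_congr rfl fun θ _ => ?_
    rcases h : θ i with _ | _ <;> simp [h]
  have h2 : (∑ θ : Fin n → Bool, (if θ i then (1:ℝ) else 0))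
      + ∑ θ : Fin n → Bool, (if θ i then (0:ℝ) else 1) = 2 ^ n := by
    rw [← Finset.sum_add_distrib]
    have : ∀ θ : Fin n → Bool, (if θ i then (1:ℝ) else 0) + (if θ i then (0:ℝ) else 1) = 1 := by
      intro θ; rcases h : θ i with _ | _ <;> simp [h]
    simp [this]
  linarith [h1, h2]

lemma sum_if_one' (i : Fin n) :
    ∑ θ : Fin n → Bool, (if θ i then (0:ℝ) else 1) = 2 ^ n / 2 := by
  have h1 : ∑ θ : Fin n → Bool, (if θ i then (1:ℝ) else 0)
      = ∑ θ : Fin n → Bool, (if θ i then (0:ℝ) else 1) := by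
    rw [← sum_flip i (fun θ => if θ i then (0:ℝ) else 1)]
    refine Finset.sum_congr rfl fun θ _ => ?_
    rcases h : θ i with _ | _ <;> simp [h]
  rw [← h1]; exact sum_if_one i

lemma sum_split (i : Fin n) (A B : ℝ) (f : (Fin n → Bool) → ℝ) :
    ∑ θ : Fin n → Bool, f θ * (if θ i then B else A)
      = B * (∑ θ : Fin n → Bool, if θ i then f θ else 0)
        + A * (∑ θ : Fin n → Bool, if θ i then 0 else f θ) := by
  rw [Finset.mul_sum, Finset.mul_sum, ← Finset.sum_add_distrib]
  refine Finset.sum_congr rfl fun θ _ => ?_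
  rcases h : θ i with _ | _ <;> simp [h] <;> ring

lemma sum_if_split (i : Fin n) (f : (Fin n → Bool) → ℝ) :
    ∑ θ : Fin n → Bool, (if θ i then f θ else 0)
      = ∑ θ : Fin n → Bool, f θ - ∑ θ : Fin n → Bool, (if θ i then 0 else f θ) := by
  rw [eq_sub_iff_add_eq, ← Finset.sum_add_distrib]
  refine Finset.sum_congr rfl fun θ _ => ?_
  rcases h : θ i with _ | _ <;> simp [h]

-- ## forward direction

lemma forward (x a b : Fin n → ℝ) (ε : ℝ) (hn : 0 < n) (hε : 0 < ε)
    (hεle : ε ≤ 1 / (2 * n + 2))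
    (hab1 : ∀ i, x i * a i + (1/2 - x i) * b i = 0)
    (hab2 : ∀ i, (1/2 - x i) * a i + x i * b i = 1/2)
    (φ : (Fin n → Bool) → Option (Fin n) → ℝ)
    (hsch : IsScheme φ) (hic : IC a b φ)
    (hub : (ε - 1) / 2 ≤ senderUtil a b ε φ) : MemKhintchine x := by
  obtain ⟨hφ0, hφ1⟩ := hsch
  have hsum : ∀ i, a i + b i = 1 := fun i => by linear_combination 2 * hab1 i + 2 * hab2 i
  have hdiff : ∀ i, (a i - b i) * (1 - 4 * x i) = 1 := fun i => by
    linear_combination (-2) * hab1 i + 2 * hab2 i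
  set u : ℝ := (1 / 2 ^ n : ℝ) with hu
  have hupos : 0 < u := by rw [hu]; positivity
  have hu2n : u * 2 ^ n = 1 := by rw [hu]; field_simp
  clear_value u
  set ψ : (Fin n → Bool) → ℝ := fun θ => φ θ none with hψ
  have hψ0 : ∀ θ, 0 ≤ ψ θ := fun θ => hφ0 θ none
  have hψ1 : ∀ θ, ψ θ ≤ 1 := by
    intro θ
    have h := Finset.single_le_sum (f := fun o => φ θ o) (fun o _ => hφ0 θ o)
      (Finset.mem_univ none)
    rw [hφ1 θ] at h; exact h
  set Q : ℝ := ∑ θ : Fin n → Bool, ψ θ with hQ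
  set q : ℝ := u * Q with hq
  set P0 : Fin n → ℝ := fun i => u * ∑ θ : Fin n → Bool, (if θ i then 0 else ψ θ) with hP0
  set P1 : Fin n → ℝ := fun i => u * ∑ θ : Fin n → Bool, (if θ i then ψ θ else 0) with hP1
  have hP01 : ∀ i, P0 i + P1 i = q := by
    intro i
    rw [hP0, hP1, hq, ← mul_add, ← Finset.sum_add_distrib]
    congr 1
    refine Finset.sum_congr rfl fun θ _ => ?_
    rcases h : θ i with _ | _ <;> simp [h]
  set s : Fin n → ℝ := fun i => -(a i * P0 i + b i * P1 i) with hs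
  have hsP : ∀ i, a i * P0 i + b i * P1 i = -(s i) := fun i => by rw [hs]; ring
  clear_value Q q P0 P1 s
  -- the none-signal expectation of action i
  have hW0 : ∀ i, ∑ θ : Fin n → Bool, unif n θ * ψ θ * rcv a b θ (some i)
      = a i * P0 i + b i * P1 i := by
    intro i
    have e0 : ∑ θ : Fin n → Bool, unif n θ * ψ θ * rcv a b θ (some i)
        = b i * (∑ θ : Fin n → Bool, if θ i then unif n θ * ψ θ else 0)
          + a i * (∑ θ : Fin n → Bool, if θ i then 0 else unif n θ * ψ θ) := by
      rw [← sum_split i (a i) (b i) (fun θ => unif n θ * ψ θ)]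
      exact Finset.sum_congr rfl fun θ _ => by simp [rcv]
    rw [e0]
    have e1 : (∑ θ : Fin n → Bool, if θ i then unif n θ * ψ θ else 0)
        = u * (∑ θ : Fin n → Bool, if θ i then ψ θ else 0) := by
      rw [Finset.mul_sum]
      refine Finset.sum_congr rfl fun θ _ => ?_
      rcases h : θ i with _ | _ <;> simp [h, unif, hu]
    have e2 : (∑ θ : Fin n → Bool, if θ i then 0 else unif n θ * ψ θ)
        = u * (∑ θ : Fin n → Bool, if θ i then 0 else ψ θ) := by
      rw [Finset.mul_sum]
      refine Finset.sum_congr rfl fun θ _ => ?_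
      rcases h : θ i with _ | _ <;> simp [h, unif, hu]
    rw [e1, e2, hP0, hP1]; ring
  have hs0 : ∀ i, 0 ≤ s i := by
    intro i
    have h := hic none (some i)
    have hr : ∑ θ : Fin n → Bool, unif n θ * φ θ none * rcv a b θ none = 0 := by
      simp [rcv]
    rw [hr] at h
    have h2 : ∑ θ : Fin n → Bool, unif n θ * ψ θ * rcv a b θ (some i) ≤ 0 := h
    rw [hW0 i] at h2
    have hsi := hsP i
    linarith
  -- full-expectation identity
  have hfull : ∀ i, (a i * P0 i + b i * P1 i)
      + ∑ j : Fin n, (∑ θ : Fin n → Bool, unif n θ * φ θ (some j) * rcv a b θ (some i))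
      = 1/2 := by
    intro i
    have hswap : ∑ o : Option (Fin n),
        (∑ θ : Fin n → Bool, unif n θ * φ θ o * rcv a b θ (some i)) = 1/2 := by
      rw [Finset.sum_comm]
      have hpt : ∀ θ : Fin n → Bool, ∑ o : Option (Fin n),
          unif n θ * φ θ o * rcv a b θ (some i) = unif n θ * rcv a b θ (some i) := by
        intro θ
        calc ∑ o : Option (Fin n), unif n θ * φ θ o * rcv a b θ (some i)
            = ∑ o : Option (Fin n), φ θ o * (unif n θ * rcv a b θ (some i)) := by
              exact Finset.sum_congr rfl fun o _ => by ring
          _ = (∑ o : Option (Fin n), φ θ o) * (unif n θ * rcv a b θ (some i)) := by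
              rw [Finset.sum_mul]
          _ = unif n θ * rcv a b θ (some i) := by rw [hφ1 θ, one_mul]
      rw [Finset.sum_congr rfl fun θ _ => hpt θ]
      have e0 : ∑ θ : Fin n → Bool, unif n θ * rcv a b θ (some i)
          = b i * (∑ θ : Fin n → Bool, if θ i then unif n θ else 0)
            + a i * (∑ θ : Fin n → Bool, if θ i then 0 else unif n θ) := by
        rw [← sum_split i (a i) (b i) (fun θ => unif n θ)]
        exact Finset.sum_congr rfl fun θ _ => by simp [rcv]
      rw [e0]
      have e1 : (∑ θ : Fin n → Bool, if θ i then unif n θ else 0)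
          = u * (2 ^ n / 2) := by
        rw [← sum_if_one i, Finset.mul_sum]
        refine Finset.sum_congr rfl fun θ _ => ?_
        rcases h : θ i with _ | _ <;> simp [h, unif, hu]
      have e2 : (∑ θ : Fin n → Bool, if θ i then 0 else unif n θ)
          = u * (2 ^ n / 2) := by
        rw [← sum_if_one' i, Finset.mul_sum]
        refine Finset.sum_congr rfl fun θ _ => ?_
        rcases h : θ i with _ | _ <;> simp [h, unif, hu]
      rw [e1, e2]
      have : u * (2^n/2) = 1/2 := by
        rw [show u * ((2:ℝ)^n/2) = (u * 2^n)/2 from by ring, hu2n]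
      rw [this]
      linarith [hsum i]
    rw [Fintype.sum_option] at hswap
    rw [← hW0 i]
    exact hswap
  set Sg : ℝ := ∑ j : Fin n,
    (∑ θ : Fin n → Bool, unif n θ * φ θ (some j) * rcv a b θ (some j)) with hSg
  have hSlb : ∀ i, 1/2 + s i ≤ Sg := by
    intro i
    have hle : ∑ j : Fin n, (∑ θ : Fin n → Bool, unif n θ * φ θ (some j) * rcv a b θ (some i))
        ≤ Sg := by
      rw [hSg]
      exact Finset.sum_le_sum fun j _ => hic (some j) (some i)
    have := hfull i
    rw [hsP i] at this
    linarith
  -- sender utility identity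
  have hUeq : senderUtil a b ε φ = ε * q - Sg := by
    unfold senderUtil
    have hpt : ∀ θ : Fin n → Bool, ∑ o : Option (Fin n), unif n θ * φ θ o * snd a b ε θ o
        = ε * (u * ψ θ) + ∑ i : Fin n, -(unif n θ * φ θ (some i) * rcv a b θ (some i)) := by
      intro θ
      rw [Fintype.sum_option]
      have h1 : unif n θ * φ θ none * snd a b ε θ none = ε * (u * ψ θ) := by
        show unif n θ * ψ θ * ε = _
        simp only [unif, hu]; ring
      rw [h1]
      congr 1
      refine Finset.sum_congr rfl fun i _ => ?_
      show unif n θ * φ θ (some i) * (-(if θ i then b i else a i)) = _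
      show _ = -(unif n θ * φ θ (some i) * (if θ i then b i else a i))
      ring
    rw [Finset.sum_congr rfl fun θ _ => hpt θ, Finset.sum_add_distrib, ← Finset.mul_sum,
      ← Finset.mul_sum, Finset.sum_comm]
    rw [show ∑ θ : Fin n → Bool, ψ θ = Q from hQ.symm]
    have h2 : ∑ i : Fin n, ∑ θ : Fin n → Bool,
        -(unif n θ * φ θ (some i) * rcv a b θ (some i)) = -Sg := by
      rw [hSg, ← Finset.sum_neg_distrib]
      exact Finset.sum_congr rfl fun i _ => by rw [Finset.sum_neg_distrib]
    rw [h2, hq]; ring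
  -- basic bounds
  have hsle : ∀ i, s i ≤ ε * (q - 1/2) := by
    intro i
    have h1 := hSlb i
    rw [hUeq] at hub
    linarith
  have hqhalf : 1/2 ≤ q := by
    have h0 := hs0 ⟨0, hn⟩
    have h1 := hsle ⟨0, hn⟩
    by_contra hc
    push_neg at hc
    have h2 : ε * (q - 1/2) < 0 := mul_neg_of_pos_of_neg hε (by linarith)
    exact ((h0.trans h1).not_gt h2)
  have hq1 : q ≤ 1 := by
    have hQle : Q ≤ 2 ^ n := by
      rw [hQ]
      calc ∑ θ : Fin n → Bool, ψ θ ≤ ∑ _θ : Fin n → Bool, (1:ℝ) :=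
            Finset.sum_le_sum fun θ _ => hψ1 θ
        _ = 2 ^ n := by simp
    rw [hq]
    calc u * Q ≤ u * 2 ^ n := by
          exact mul_le_mul_of_nonneg_left hQle hupos.le
      _ = 1 := hu2n
  have hq0 : 0 < q := by linarith
  -- the key identity for marginals
  have hkey : ∀ i, P0 i = 2 * q * x i - s i * (1 - 4 * x i) := by
    intro i
    linear_combination (1 - 4 * x i) * hsP i
      - ((1 - 4 * x i) * (P0 i + P1 i) / 2) * hsum i
      - ((P0 i - P1 i) / 2) * hdiff i + (2 * x i) * hP01 i
  -- mixing coefficients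
  set γ : Fin n → ℝ := fun i => s i / (q + 2 * s i) with hγ
  have hden : ∀ i, 0 < q + 2 * s i := fun i => by have := hs0 i; linarith
  have hγeq : ∀ i, γ i * (q + 2 * s i) = s i := fun i =>
    div_mul_cancel₀ (s i) (hden i).ne'
  have hγ0 : ∀ i, 0 ≤ γ i := fun i => div_nonneg (hs0 i) (hden i).le
  clear_value γ
  have hγle : ∀ i, γ i ≤ ε := by
    intro i
    have h1 := hγeq i
    have h3 := hden i
    have h5 := hsle i
    have h6 : s i ≤ ε * (q + 2 * s i) := by
      have e1 : ε * (q - 1/2) = ε * q - ε/2 := by ring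
      have e2 : ε * (q + 2 * s i) = ε * q + 2 * (ε * s i) := by ring
      have e3 : 0 ≤ ε * s i := mul_nonneg hε.le (hs0 i)
      linarith
    have h7 : γ i * (q + 2 * s i) ≤ ε * (q + 2 * s i) := by rw [h1]; exact h6
    exact le_of_mul_le_mul_right h7 h3
  set Γ : ℝ := ∑ i : Fin n, γ i with hΓ
  have hΓ0 : 0 ≤ Γ := Finset.sum_nonneg fun i _ => hγ0 i
  clear_value Γ
  have hΓle : Γ ≤ 1/2 := by
    have h1 : Γ ≤ (n:ℝ) * ε := by
      rw [hΓ]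
      calc ∑ i : Fin n, γ i ≤ ∑ _i : Fin n, ε := Finset.sum_le_sum fun i _ => hγle i
        _ = (n:ℝ) * ε := by
          rw [Finset.sum_const, Finset.card_univ, Fintype.card_fin, nsmul_eq_mul]
    have h2 : (n:ℝ) * ε ≤ (n:ℝ) * (1 / (2*n+2)) :=
      mul_le_mul_of_nonneg_left hεle (Nat.cast_nonneg n)
    have h3 : (n:ℝ) * (1 / (2*n+2)) ≤ 1/2 := by
      rw [mul_one_div, div_le_iff₀ (by positivity)]
      ring_nf
      linarith [Nat.cast_nonneg (α := ℝ) n]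
    linarith
  -- the witness
  set w : (Fin n → Bool) → ℝ :=
    fun θ => (1 - Γ) * ψ θ + ∑ j : Fin n, γ j * ψ (flipP j θ) with hw
  set ψs : (Fin n → Bool) → ℝ := fun θ => (1/(2*q)) * w θ with hψs
  have hw0 : ∀ θ, 0 ≤ w θ := by
    intro θ
    refine add_nonneg (mul_nonneg (by linarith) (hψ0 θ)) ?_
    exact Finset.sum_nonneg fun j _ => mul_nonneg (hγ0 j) (hψ0 _)
  have hw1 : ∀ θ, w θ ≤ 1 := by
    intro θ
    have h1 : (1 - Γ) * ψ θ ≤ (1 - Γ) * 1 :=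
      mul_le_mul_of_nonneg_left (hψ1 θ) (by linarith)
    have h2 : ∑ j : Fin n, γ j * ψ (flipP j θ) ≤ ∑ j : Fin n, γ j :=
      Finset.sum_le_sum fun j _ => by
        calc γ j * ψ (flipP j θ) ≤ γ j * 1 :=
              mul_le_mul_of_nonneg_left (hψ1 _) (hγ0 j)
          _ = γ j := mul_one _
    rw [hw]
    have : ∑ j : Fin n, γ j = Γ := hΓ.symm
    rw [← this] at h1 ⊢
    dsimp only
    linarith
  have hq2inv : (0:ℝ) < 1/(2*q) := by positivity
  have hψs0 : ∀ θ, 0 ≤ ψs θ := fun θ => mul_nonneg hq2inv.le (hw0 θ)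
  have hψs1 : ∀ θ, ψs θ ≤ 1 := by
    intro θ
    rw [hψs]
    calc (1/(2*q)) * w θ ≤ (1/(2*q)) * 1 :=
          mul_le_mul_of_nonneg_left (hw1 θ) hq2inv.le
      _ ≤ 1 := by
          rw [mul_one, div_le_one (by linarith)]
          linarith
  -- sums of the witness
  have hWsum : ∑ θ : Fin n → Bool, ψs θ = (1/(2*q)) * Q := by
    rw [hψs]
    dsimp only
    rw [← Finset.mul_sum]
    congr 1
    rw [hw]
    dsimp only
    rw [Finset.sum_add_distrib, ← Finset.mul_sum, Finset.sum_comm]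
    have h1 : ∀ j : Fin n, ∑ θ : Fin n → Bool, γ j * ψ (flipP j θ) = γ j * Q := by
      intro j
      rw [← Finset.mul_sum, sum_flip j ψ, hQ]
    rw [Finset.sum_congr rfl fun j _ => h1 j, ← Finset.sum_mul, ← hΓ, ← hQ]
    ring
  have hmean : u * (∑ θ : Fin n → Bool, ψs θ) = 1/2 := by
    rw [hWsum]
    rw [show u * ((1/(2*q)) * Q) = (u * Q) / (2*q) by ring, ← hq,
      div_eq_iff (by linarith : (2*q) ≠ 0)]
    ring
  -- marginals of the witness
  have hmarg0 : ∀ i, u * (∑ θ : Fin n → Bool, (if θ i then 0 else ψs θ)) = x i := by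
    intro i
    have e : ∀ θ : Fin n → Bool, (if θ i then (0:ℝ) else ψs θ)
        = (1/(2*q)) * ((1 - Γ) * (if θ i then 0 else ψ θ)
            + ∑ j : Fin n, γ j * (if θ i then (0:ℝ) else ψ (flipP j θ))) := by
      intro θ
      rcases h : θ i with _ | _ <;> simp [h, hψs, hw]
    rw [Finset.sum_congr rfl fun θ _ => e θ, ← Finset.mul_sum]
    have e2 : ∑ θ : Fin n → Bool, ((1 - Γ) * (if θ i then 0 else ψ θ)
        + ∑ j : Fin n, γ j * (if θ i then (0:ℝ) else ψ (flipP j θ)))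
        = (1 - Γ) * (∑ θ : Fin n → Bool, (if θ i then 0 else ψ θ))
          + ∑ j : Fin n, γ j * (∑ θ : Fin n → Bool, (if θ i then (0:ℝ) else ψ (flipP j θ))) := by
      rw [Finset.sum_add_distrib, ← Finset.mul_sum, Finset.sum_comm]
      congr 1
      exact Finset.sum_congr rfl fun j _ => by rw [← Finset.mul_sum]
    rw [e2]
    have e3 : ∀ j : Fin n, γ j * (∑ θ : Fin n → Bool, (if θ i then (0:ℝ) else ψ (flipP j θ)))
        = γ j * (if j = i then (∑ θ : Fin n → Bool, (if θ i then ψ θ else 0))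
          else (∑ θ : Fin n → Bool, (if θ i then 0 else ψ θ))) := by
      intro j
      congr 1
      rcases eq_or_ne j i with rfl | h
      · rw [if_pos rfl]; exact sum_flip_if_same j ψ
      · rw [if_neg h]; exact sum_flip_if_ne i j h ψ
    rw [Finset.sum_congr rfl fun j _ => e3 j]
    set S0 : ℝ := ∑ θ : Fin n → Bool, (if θ i then (0:ℝ) else ψ θ) with hS0
    set S1 : ℝ := ∑ θ : Fin n → Bool, (if θ i then ψ θ else (0:ℝ)) with hS1
    have e4 : ∑ j : Fin n, γ j * (if j = i then S1 else S0)
        = Γ * S0 + γ i * (S1 - S0) := by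
      have e5 : ∀ j : Fin n, γ j * (if j = i then S1 else S0)
          = γ j * S0 + (if j = i then γ j * (S1 - S0) else 0) := by
        intro j
        rcases eq_or_ne j i with rfl | h
        · rw [if_pos rfl, if_pos rfl]; ring
        · rw [if_neg h, if_neg h]; ring
      rw [Finset.sum_congr rfl fun j _ => e5 j, Finset.sum_add_distrib, ← Finset.sum_mul, ← hΓ]
      congr 1
      rw [Finset.sum_ite_eq' Finset.univ i (fun j => γ j * (S1 - S0))]
      simp
    rw [e4]
    -- now express via P0, P1
    have eP0 : u * S0 = P0 i := by rw [hS0, hP0]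
    have eP1 : u * S1 = P1 i := by rw [hS1, hP1]
    have egoal : u * ((1/(2*q)) * ((1 - Γ) * S0 + (Γ * S0 + γ i * (S1 - S0))))
        = (1/(2*q)) * (P0 i + γ i * (P1 i - P0 i)) := by
      rw [← eP0, ← eP1]; ring
    rw [egoal]
    rw [one_div, inv_mul_eq_div, div_eq_iff (by positivity : (2*q) ≠ 0)]
    linear_combination (1 - 2 * γ i) * hkey i + (1 - 4 * x i) * hγeq i + (γ i) * hP01 i
  have hmarg1 : ∀ i, u * (∑ θ : Fin n → Bool, (if θ i then ψs θ else 0)) = 1/2 - x i := by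
    intro i
    rw [sum_if_split i ψs, mul_sub, hmarg0 i, hmean]
  refine ⟨ψs, fun θ => ⟨hψs0 θ, hψs1 θ⟩, ?_, ?_⟩
  · rw [← hu]; exact hmean
  · intro i
    refine ⟨by rw [← hu]; exact hmarg0 i, by rw [← hu]; exact hmarg1 i, ?_, ?_⟩
    · have e : ∑ θ : Fin n → Bool, (if θ i then (0:ℝ) else 1 - ψs θ)
          = (∑ θ : Fin n → Bool, (if θ i then (0:ℝ) else 1))
            - ∑ θ : Fin n → Bool, (if θ i then (0:ℝ) else ψs θ) := by
        rw [eq_sub_iff_add_eq, ← Finset.sum_add_distrib]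
        refine Finset.sum_congr rfl fun θ _ => ?_
        rcases h : θ i with _ | _ <;> simp [h]
      rw [← hu, e, sum_if_one' i, mul_sub, hmarg0 i]
      have : u * (2^n/2) = 1/2 := by
        rw [show u * (2^n/2) = (u * 2^n)/2 by ring, hu2n]
      rw [this]
    · have e : ∑ θ : Fin n → Bool, (if θ i then 1 - ψs θ else (0:ℝ))
          = (∑ θ : Fin n → Bool, (if θ i then (1:ℝ) else 0))
            - ∑ θ : Fin n → Bool, (if θ i then ψs θ else (0:ℝ)) := by
        rw [eq_sub_iff_add_eq, ← Finset.sum_add_distrib]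
        refine Finset.sum_congr rfl fun θ _ => ?_
        rcases h : θ i with _ | _ <;> simp [h]
      rw [← hu, e, sum_if_one i, mul_sub, hmarg1 i]
      have : u * (2^n/2) = 1/2 := by
        rw [show u * (2^n/2) = (u * 2^n)/2 by ring, hu2n]
      rw [this]
      ring

lemma backward (x a b : Fin n → ℝ) (ε : ℝ) (hε : 0 < ε)
    (hab1 : ∀ i, x i * a i + (1/2 - x i) * b i = 0)
    (hab2 : ∀ i, (1/2 - x i) * a i + x i * b i = 1/2)
    (hmem : MemKhintchine x) :
    ∃ φ : (Fin n → Bool) → Option (Fin n) → ℝ,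
      IsScheme φ ∧ IC a b φ ∧ (ε - 1) / 2 ≤ senderUtil a b ε φ := by
  obtain ⟨ψ, hψ01, hmean, hmarg⟩ := hmem
  rcases Nat.eq_zero_or_pos n with hn | hn
  · -- n = 0 : only the none signal
    subst hn
    refine ⟨fun _ _ => 1, ⟨fun _ _ => zero_le_one, fun θ => by simp⟩, ?_, ?_⟩
    · intro o o'
      match o, o' with
      | none, none => exact le_rfl
      | none, some i => exact i.elim0
      | some i, _ => exact i.elim0
    · have : senderUtil a b ε (fun _ _ => (1:ℝ)) = ε := by
        unfold senderUtil
        have : ∀ θ : Fin 0 → Bool, ∑ o : Option (Fin 0),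
            unif 0 θ * 1 * snd a b ε θ o = ε := by
          intro θ
          rw [Fintype.sum_option]
          simp [unif, snd]
        rw [Finset.sum_congr rfl fun θ _ => this θ]
        simp
      rw [this]; linarith
  · -- n ≥ 1
    set u : ℝ := (1 / 2 ^ n : ℝ) with hu
    have hupos : 0 < u := by positivity
    set φ : (Fin n → Bool) → Option (Fin n) → ℝ := fun θ o =>
      match o with
      | none => ψ θ
      | some _ => (1 - ψ θ) / n with hφ
    have hnR : (0:ℝ) < n := by exact_mod_cast hn
    -- key sums
    have L1 : ∀ i, ∑ θ : Fin n → Bool, unif n θ * ψ θ * rcv a b θ (some i) = 0 := by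
      intro i
      have : ∑ θ : Fin n → Bool, unif n θ * ψ θ * rcv a b θ (some i)
          = b i * (∑ θ : Fin n → Bool, if θ i then unif n θ * ψ θ else 0)
            + a i * (∑ θ : Fin n → Bool, if θ i then 0 else unif n θ * ψ θ) := by
        rw [← sum_split i (a i) (b i) (fun θ => unif n θ * ψ θ)]
        exact Finset.sum_congr rfl fun θ _ => by simp [rcv]
      rw [this]
      have e1 : (∑ θ : Fin n → Bool, if θ i then unif n θ * ψ θ else 0)
          = u * (∑ θ : Fin n → Bool, if θ i then ψ θ else 0) := by
        rw [Finset.mul_sum]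
        exact Finset.sum_congr rfl fun θ _ => by rcases h : θ i with _|_ <;> simp [h, unif, hu]
      have e2 : (∑ θ : Fin n → Bool, if θ i then 0 else unif n θ * ψ θ)
          = u * (∑ θ : Fin n → Bool, if θ i then 0 else ψ θ) := by
        rw [Finset.mul_sum]
        exact Finset.sum_congr rfl fun θ _ => by rcases h : θ i with _|_ <;> simp [h, unif, hu]
      rw [e1, e2, (hmarg i).2.1, (hmarg i).1]
      linarith [hab1 i]
    have L2 : ∀ i, ∑ θ : Fin n → Bool, unif n θ * (1 - ψ θ) * rcv a b θ (some i) = 1/2 := by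
      intro i
      have : ∑ θ : Fin n → Bool, unif n θ * (1 - ψ θ) * rcv a b θ (some i)
          = b i * (∑ θ : Fin n → Bool, if θ i then unif n θ * (1 - ψ θ) else 0)
            + a i * (∑ θ : Fin n → Bool, if θ i then 0 else unif n θ * (1 - ψ θ)) := by
        rw [← sum_split i (a i) (b i) (fun θ => unif n θ * (1 - ψ θ))]
        exact Finset.sum_congr rfl fun θ _ => by simp [rcv]
      rw [this]
      have e1 : (∑ θ : Fin n → Bool, if θ i then unif n θ * (1 - ψ θ) else 0)
          = u * (∑ θ : Fin n → Bool, if θ i then 1 - ψ θ else 0) := by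
        rw [Finset.mul_sum]
        exact Finset.sum_congr rfl fun θ _ => by rcases h : θ i with _|_ <;> simp [h, unif, hu]
      have e2 : (∑ θ : Fin n → Bool, if θ i then 0 else unif n θ * (1 - ψ θ))
          = u * (∑ θ : Fin n → Bool, if θ i then 0 else 1 - ψ θ) := by
        rw [Finset.mul_sum]
        exact Finset.sum_congr rfl fun θ _ => by rcases h : θ i with _|_ <;> simp [h, unif, hu]
      rw [e1, e2, (hmarg i).2.2.2, (hmarg i).2.2.1]
      linarith [hab2 i]
    have Lnone : ∀ o, ∑ θ : Fin n → Bool, unif n θ * φ θ o * rcv a b θ none = 0 := by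
      intro o; simp [rcv]
    have Lsome : ∀ i j, ∑ θ : Fin n → Bool, unif n θ * φ θ (some i) * rcv a b θ (some j)
        = (1/n) * (1/2) := by
      intro i j
      have : ∀ θ : Fin n → Bool, unif n θ * φ θ (some i) * rcv a b θ (some j)
          = (1/n) * (unif n θ * (1 - ψ θ) * rcv a b θ (some j)) := by
        intro θ; show unif n θ * ((1 - ψ θ)/n) * _ = _; ring
      rw [Finset.sum_congr rfl fun θ _ => this θ, ← Finset.mul_sum, L2 j]
    refine ⟨φ, ⟨?_, ?_⟩, ?_, ?_⟩
    · intro θ o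
      match o with
      | none => exact (hψ01 θ).1
      | some i => exact div_nonneg (by linarith [(hψ01 θ).2]) hnR.le
    · intro θ
      rw [Fintype.sum_option]
      show ψ θ + ∑ _i : Fin n, (1 - ψ θ)/n = 1
      rw [Finset.sum_const, Finset.card_univ, Fintype.card_fin, nsmul_eq_mul]
      field_simp
      ring
    · intro o o'
      match o, o' with
      | none, none => exact le_rfl
      | none, some i =>
          rw [Lnone none]
          have : ∑ θ : Fin n → Bool, unif n θ * φ θ none * rcv a b θ (some i) = 0 := L1 i
          rw [this]
      | some i, none =>
          rw [Lnone (some i), Lsome i i]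
          exact mul_nonneg (one_div_nonneg.mpr hnR.le) (by norm_num)
      | some i, some j => rw [Lsome i j, Lsome i i]
    · have : senderUtil a b ε φ = ε * (1/2) + ∑ _i : Fin n, -((1/(n:ℝ))*(1/2)) := by
        unfold senderUtil
        have hpt : ∀ θ : Fin n → Bool, ∑ o : Option (Fin n), unif n θ * φ θ o * snd a b ε θ o
            = ε * (unif n θ * ψ θ) + ∑ i : Fin n, -(unif n θ * φ θ (some i) * rcv a b θ (some i)) := by
          intro θ
          rw [Fintype.sum_option]
          have h1 : unif n θ * φ θ none * snd a b ε θ none = ε * (unif n θ * ψ θ) := by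
            show unif n θ * ψ θ * ε = _; ring
          rw [h1]
          congr 1
          refine Finset.sum_congr rfl fun i _ => ?_
          show unif n θ * φ θ (some i) * (-(if θ i then b i else a i)) = _
          show _ = -(unif n θ * φ θ (some i) * (if θ i then b i else a i))
          ring
        rw [Finset.sum_congr rfl fun θ _ => hpt θ, Finset.sum_add_distrib, ← Finset.mul_sum]
        have hm : ∑ θ : Fin n → Bool, unif n θ * ψ θ = 1/2 := by
          rw [← hmean, Finset.mul_sum]
          exact Finset.sum_congr rfl fun θ _ => by rw [hu]; rfl
        rw [hm, Finset.sum_comm]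
        congr 1
        refine Finset.sum_congr rfl fun i _ => ?_
        rw [Finset.sum_neg_distrib, Lsome i i]
      rw [this]
      rw [Finset.sum_const, Finset.card_univ, Fintype.card_fin, nsmul_eq_mul]
      have : (n:ℝ) * -((1/n)*(1/2)) = -(1/2) := by field_simp
      rw [this]; linarith


end SpecialInstance

/-- let `x ∈ (0,1/2)^n` with `x i ≠ 1/4`, and let `(a i, b i)` solve
`x i · a i + (1/2 − x i) · b i = 0` and `(1/2 − x i) · a i + x i · b i = 1/2`.  Then
there is an `ε₀ > 0` such that for every `ε ∈ (0, ε₀]`, in the special-action persuasion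
instance built from `a`, `b`, `ε`, the maximum expected sender utility over
incentive-compatible direct schemes is at least `(ε − 1)/2` iff `M(x) ∈ K(n)`. -/
theorem membership_iff_sender_utility
    {n : ℕ} (x a b : Fin n → ℝ)
    (hx : ∀ i, 0 < x i ∧ x i < 1/2) (hx4 : ∀ i, x i ≠ 1/4)
    (hab1 : ∀ i, x i * a i + (1/2 - x i) * b i = 0)
    (hab2 : ∀ i, (1/2 - x i) * a i + x i * b i = 1/2) :
    ∃ ε₀ : ℝ, 0 < ε₀ ∧ ∀ ε : ℝ, 0 < ε → ε ≤ ε₀ →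
      ((∃ φ : (Fin n → Bool) → Option (Fin n) → ℝ,
          IsScheme φ ∧ IC a b φ ∧ (ε - 1) / 2 ≤ senderUtil a b ε φ)
        ↔ MemKhintchine x) := by
  refine ⟨1 / (2 * (n:ℝ) + 2), by positivity, fun ε hε hεle => ?_⟩
  constructor
  · rintro ⟨φ, hsch, hic, hub⟩
    rcases Nat.eq_zero_or_pos n with hn | hn
    · subst hn
      refine ⟨fun _ => 1/2, fun θ => by norm_num, ?_, fun i => i.elim0⟩
      norm_num
    · exact forward x a b ε hn hε hεle hab1 hab2 φ hsch hic hub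
  · intro hmem
    exact backward x a b ε hε hab1 hab2 hmem
end

section
/- Let λ be a distribution with finite support on states of nature with n actions and all payoffs in [−1,1], let OPT be the maximum expected sender utility over incentive-compatible direct schemes, and let ε > 0. Then there exists an incentive-compatible direct scheme φ̂ with expected sender utility at least OPT − ε/2 such that every signal σ_i of φ̂ is either large, meaning Σ_θ λ_θ φ̂(θ,σ_i) ≥ ε/(4n), or honest, meaning φ̂(θ,σ_i) > 0 only for states θ with r_i(θ) = max_j r_j(θ). -/
/-!
Start from an optimal incentive-compatible scheme and call a signal small when it is sent with
probability below `ε / (4n)`. In every state, move the weight of the small signals onto a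
receiver-optimal action. Recommendations of receiver-optimal actions are obeyed, so the new
scheme is still incentive compatible; every signal is now large or honest; and since payoffs lie
in `[-1, 1]` the sender loses at most twice the total small mass, which is at most `ε / 4`.
-/

open Finset

namespace Persuasion

variable {Θ : Type*} [Fintype Θ] {n : ℕ}

/-- `μ` is a probability distribution on the finite type `Θ`. -/
def IsDist (μ : Θ → ℝ) : Prop := (∀ θ, 0 ≤ μ θ) ∧ ∑ θ, μ θ = 1

/-- a direct signaling scheme: a probability distribution over the `n` signals
(signal `i` recommending action `i`) for each state -/
def IsScheme (φ : Θ → Fin n → ℝ) : Prop :=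
  (∀ θ i, 0 ≤ φ θ i) ∧ ∀ θ, ∑ i, φ θ i = 1

/-- `ε`-incentive compatibility of a direct scheme for the distribution `μ`
(`ε = 0` gives exact incentive compatibility) -/
def EIC (μ : Θ → ℝ) (r : Θ → Fin n → ℝ) (ε : ℝ) (φ : Θ → Fin n → ℝ) : Prop :=
  ∀ i j : Fin n,
    ∑ θ, μ θ * φ θ i * (r θ j - ε) ≤ ∑ θ, μ θ * φ θ i * r θ i

/-- expected sender utility of a direct scheme under `μ`, assuming the receiver
follows the recommendations -/
def senderUtil (μ : Θ → ℝ) (s : Θ → Fin n → ℝ) (φ : Θ → Fin n → ℝ) : ℝ :=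
  ∑ θ, ∑ i, μ θ * φ θ i * s θ i

end Persuasion

theorem sum_filter_lt_le_card_mul {ι : Type*} [Fintype ι] (f : ι → ℝ) {c : ℝ} (hc : 0 ≤ c) :
    ∑ i ∈ univ.filter (f · < c), f i ≤ Fintype.card ι * c := by
  calc ∑ i ∈ univ.filter (f · < c), f i ≤ #(univ.filter (f · < c)) • c :=
        sum_le_card_nsmul _ _ _ fun i hi => (mem_filter.1 hi).2.le
    _ ≤ Fintype.card ι * c := by
        rw [nsmul_eq_mul]
        gcongr
        exact_mod_cast card_le_univ _

namespace Persuasion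

variable {Θ : Type*} {n : ℕ} {μ : Θ → ℝ} {r s : Θ → Fin n → ℝ} {ε : ℝ} {φ ψ : Θ → Fin n → ℝ}

def dropSignals (φ : Θ → Fin n → ℝ) (S : Finset (Fin n)) : Θ → Fin n → ℝ :=
  fun θ i => if i ∈ S then 0 else φ θ i

def divert (φ : Θ → Fin n → ℝ) (S : Finset (Fin n)) (b : Θ → Fin n) : Θ → Fin n → ℝ :=
  fun θ => Pi.single (b θ) (∑ i ∈ S, φ θ i)

theorem IsScheme.exists_bestResponse (hφ : IsScheme φ) (r : Θ → Fin n → ℝ) (θ : Θ) :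
    ∃ b, ∀ j, r θ j ≤ r θ b := by
  have hsignals : (univ : Finset (Fin n)).Nonempty :=
    nonempty_of_sum_ne_zero (f := φ θ) (by rw [hφ.2 θ]; exact one_ne_zero)
  obtain ⟨b, -, hb⟩ := exists_max_image univ (r θ) hsignals
  exact ⟨b, fun j => hb j (mem_univ j)⟩

theorem divert_nonneg (hφ : ∀ θ i, 0 ≤ φ θ i) (S : Finset (Fin n)) (b : Θ → Fin n) (θ : Θ)
    (i : Fin n) : 0 ≤ divert φ S b θ i := by
  unfold divert
  rw [Pi.single_apply]
  split_ifs
  exacts [sum_nonneg fun k _ => hφ θ k, le_rfl]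

theorem eq_of_divert_pos {S : Finset (Fin n)} {b : Θ → Fin n} {θ : Θ} {i : Fin n}
    (h : 0 < divert φ S b θ i) : i = b θ := by
  by_contra hne
  simp [divert, hne] at h

theorem IsScheme.dropSignals_add_divert (hφ : IsScheme φ) (S : Finset (Fin n))
    (b : Θ → Fin n) : IsScheme (dropSignals φ S + divert φ S b) := by
  refine ⟨fun θ i => add_nonneg ?_ (divert_nonneg hφ.1 S b θ i), fun θ => ?_⟩
  · unfold dropSignals
    split_ifs
    exacts [le_rfl, hφ.1 θ i]
  · have hdrop : ∑ i, dropSignals φ S θ i = ∑ i ∈ Sᶜ, φ θ i := by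
      simp [dropSignals, sum_ite, compl_eq_univ_sdiff, filter_notMem_eq_sdiff]
    have hdivert : ∑ i, divert φ S b θ i = ∑ i ∈ S, φ θ i := by simp [divert]
    simp only [Pi.add_apply, sum_add_distrib, hdrop, hdivert, sum_compl_add_sum, hφ.2 θ]

variable [Fintype Θ]

def signalMass (μ : Θ → ℝ) (φ : Θ → Fin n → ℝ) (i : Fin n) : ℝ := ∑ θ, μ θ * φ θ i

theorem EIC.add (hφ : EIC μ r ε φ) (hψ : EIC μ r ε ψ) : EIC μ r ε (φ + ψ) := by
  intro i j
  simp only [Pi.add_apply, mul_add, add_mul, sum_add_distrib]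
  exact add_le_add (hφ i j) (hψ i j)

theorem EIC.dropSignals (h : EIC μ r ε φ) (S : Finset (Fin n)) :
    EIC μ r ε (dropSignals φ S) := by
  intro i j
  by_cases hi : i ∈ S
  · simp [Persuasion.dropSignals, hi]
  · simpa [Persuasion.dropSignals, hi] using h i j

theorem eic_of_honest (hμ : ∀ θ, 0 ≤ μ θ) (hψ : ∀ θ i, 0 ≤ ψ θ i) (hε : 0 ≤ ε)
    (honest : ∀ θ i, 0 < ψ θ i → ∀ j, r θ j ≤ r θ i) : EIC μ r ε ψ := by
  intro i j
  refine sum_le_sum fun θ _ => ?_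
  rcases (hψ θ i).eq_or_lt with h0 | hpos
  · simp [← h0]
  · exact mul_le_mul_of_nonneg_left (by linarith [honest θ i hpos j])
      (mul_nonneg (hμ θ) hpos.le)

theorem senderUtil_add : senderUtil μ s (φ + ψ) = senderUtil μ s φ + senderUtil μ s ψ := by
  simp only [senderUtil, Pi.add_apply, mul_add, add_mul, sum_add_distrib]

theorem senderUtil_le_dropSignals_add (hμ : ∀ θ, 0 ≤ μ θ) (hφ : ∀ θ i, 0 ≤ φ θ i)
    (hs : ∀ θ i, s θ i ≤ 1) (S : Finset (Fin n)) :
    senderUtil μ s φ ≤ senderUtil μ s (dropSignals φ S) + ∑ i ∈ S, signalMass μ φ i := by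
  calc senderUtil μ s φ
      = ∑ θ, (∑ i ∈ Sᶜ, μ θ * φ θ i * s θ i + ∑ i ∈ S, μ θ * φ θ i * s θ i) := by
        simp only [senderUtil, sum_compl_add_sum]
    _ ≤ ∑ θ, (∑ i ∈ Sᶜ, μ θ * φ θ i * s θ i + ∑ i ∈ S, μ θ * φ θ i) := by
        refine sum_le_sum fun θ _ => add_le_add_right (sum_le_sum fun i _ => ?_) _
        exact mul_le_of_le_one_right (mul_nonneg (hμ θ) (hφ θ i)) (hs θ i)
    _ = senderUtil μ s (dropSignals φ S) + ∑ i ∈ S, signalMass μ φ i := by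
        rw [sum_add_distrib]
        simp [senderUtil, Persuasion.dropSignals, signalMass, sum_ite, mul_ite, ite_mul,
          compl_eq_univ_sdiff, filter_notMem_eq_sdiff, sum_comm (s := S)]

theorem neg_sum_signalMass_le_senderUtil_divert (hμ : ∀ θ, 0 ≤ μ θ) (hφ : ∀ θ i, 0 ≤ φ θ i)
    (hs : ∀ θ i, -1 ≤ s θ i) (S : Finset (Fin n)) (b : Θ → Fin n) :
    -∑ i ∈ S, signalMass μ φ i ≤ senderUtil μ s (divert φ S b) := by
  calc -∑ i ∈ S, signalMass μ φ i = ∑ θ, -(μ θ * ∑ i ∈ S, φ θ i) := by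
        simp only [signalMass, mul_sum, sum_neg_distrib, sum_comm (s := S)]
    _ ≤ ∑ θ, μ θ * (∑ i ∈ S, φ θ i) * s θ (b θ) := by
        gcongr with θ
        have : 0 ≤ μ θ * ∑ i ∈ S, φ θ i := mul_nonneg (hμ θ) (sum_nonneg fun i _ => hφ θ i)
        nlinarith [hs θ (b θ)]
    _ = senderUtil μ s (divert φ S b) := by
        simp [senderUtil, divert, Pi.single_apply, mul_ite, ite_mul]

theorem signalMass_le_dropSignals_add_divert (hμ : ∀ θ, 0 ≤ μ θ) (hφ : ∀ θ i, 0 ≤ φ θ i)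
    {S : Finset (Fin n)} (b : Θ → Fin n) {i : Fin n} (hi : i ∉ S) :
    signalMass μ φ i ≤ signalMass μ (dropSignals φ S + divert φ S b) i := by
  refine sum_le_sum fun θ _ => mul_le_mul_of_nonneg_left ?_ (hμ θ)
  simpa [Persuasion.dropSignals, hi] using divert_nonneg hφ S b θ i

end Persuasion

open Persuasion

theorem large_or_honest_near_optimal_scheme_general
    {Θ : Type*} [Fintype Θ] {n : ℕ}
    (lam : Θ → ℝ) (hlam : IsDist lam)
    (s r : Θ → Fin n → ℝ)
    (hs : ∀ θ i, s θ i ∈ Set.Icc (-1 : ℝ) 1)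
    (ε : ℝ) (hε : 0 < ε)
    (OPT : ℝ)
    (hOPT : IsGreatest {u : ℝ | ∃ φ : Θ → Fin n → ℝ,
      IsScheme φ ∧ EIC lam r 0 φ ∧ u = senderUtil lam s φ} OPT) :
    ∃ φ : Θ → Fin n → ℝ, IsScheme φ ∧ EIC lam r 0 φ ∧
      OPT - ε / 2 ≤ senderUtil lam s φ ∧
      ∀ i : Fin n,
        (ε / (4 * n) ≤ ∑ θ, lam θ * φ θ i) ∨
        (∀ θ, 0 < φ θ i → ∀ j, r θ j ≤ r θ i) := by
  obtain ⟨φ, hφ, hφIC, rfl⟩ := hOPT.1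
  choose b hb using hφ.exists_bestResponse r
  set S := univ.filter (signalMass lam φ · < ε / (4 * n))
  have hsmall : ∑ i ∈ S, signalMass lam φ i ≤ ε / 4 := by
    refine (sum_filter_lt_le_card_mul _ (by positivity)).trans ?_
    calc (Fintype.card (Fin n) : ℝ) * (ε / (4 * n)) = ε / 4 * (n / n) := by
          rw [Fintype.card_fin]; ring
      _ ≤ ε / 4 := mul_le_of_le_one_right (by positivity) (div_self_le_one _)
  have honest : ∀ θ i, 0 < divert φ S b θ i → ∀ j, r θ j ≤ r θ i :=
    fun θ i h => eq_of_divert_pos h ▸ hb θ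
  refine ⟨dropSignals φ S + divert φ S b, hφ.dropSignals_add_divert S b,
    (hφIC.dropSignals S).add (eic_of_honest hlam.1 (divert_nonneg hφ.1 S b) le_rfl honest),
    ?_, fun i => ?_⟩
  · rw [senderUtil_add]
    linarith [senderUtil_le_dropSignals_add hlam.1 hφ.1 (fun θ i => (hs θ i).2) S,
      neg_sum_signalMass_le_senderUtil_divert hlam.1 hφ.1 (fun θ i => (hs θ i).1) S b]
  · by_cases hi : i ∈ S
    · exact .inr fun θ hpos => honest θ i (by simpa [dropSignals, hi] using hpos)
    · refine .inl (le_trans ?_ (signalMass_le_dropSignals_add_divert hlam.1 hφ.1 b hi))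
      simpa [S] using hi

/-- for any finite persuasion instance with payoffs in `[−1,1]` and
any `ε > 0`, there is an incentive-compatible direct scheme with expected sender
utility at least `OPT − ε/2` each of whose signals is either *large* (sent with
probability at least `ε/(4n)`) or *honest* (sent only in states where the recommended
action maximizes the receiver's payoff). -/
theorem large_or_honest_near_optimal_scheme
    {Θ : Type*} [Fintype Θ] {n : ℕ}
    (lam : Θ → ℝ) (hlam : IsDist lam)
    (s r : Θ → Fin n → ℝ)
    (hs : ∀ θ i, s θ i ∈ Set.Icc (-1 : ℝ) 1) (hr : ∀ θ i, r θ i ∈ Set.Icc (-1 : ℝ) 1)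
    (ε : ℝ) (hε : 0 < ε)
    (OPT : ℝ)
    (hOPT : IsGreatest {u : ℝ | ∃ φ : Θ → Fin n → ℝ,
      IsScheme φ ∧ EIC lam r 0 φ ∧ u = senderUtil lam s φ} OPT) :
    ∃ φ : Θ → Fin n → ℝ, IsScheme φ ∧ EIC lam r 0 φ ∧
      OPT - ε / 2 ≤ senderUtil lam s φ ∧
      ∀ i : Fin n,
        (ε / (4 * n) ≤ ∑ θ, lam θ * φ θ i) ∨
        (∀ θ, 0 < φ θ i → ∀ j, r θ j ≤ r θ i) :=
  large_or_honest_near_optimal_scheme_general lam hlam s r hs ε hε OPT hOPT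
end

section
/- Let λ be a finitely supported distribution on states of nature with n actions and ε ≥ 0, and fix K ≥ 1. Let F be any function that maps each K-tuple (θ_1,…,θ_K) of states to a direct signaling scheme on the indices {1,…,K} (i.e., F(θ_1,…,θ_K)(k) is a probability distribution over signals σ_1,…,σ_n for each k ∈ [K]) that is ε-incentive compatible for the uniform distribution on the multiset {θ_1,…,θ_K} (with r evaluated at θ_k for index k). Define the composed scheme φ: on input θ, draw ℓ uniformly from [K], draw θ_k ~ λ i.i.d. for all k ≠ ℓ, set θ_ℓ = θ, and output a signal drawn from F(θ_1,…,θ_K)(ℓ). Then φ is ε-incentive compatible for λ. -/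
open Finset

open Persuasion

namespace Persuasion

/-- the composed scheme of Algorithm 2: on input `θ`, draw `ℓ` uniformly from `[K]`,
draw `θ_k ~ lam` i.i.d. for `k ≠ ℓ`, set `θ_ℓ = θ`, and output a signal drawn from
`F (θ_1, …, θ_K) ℓ`.  `composed lam F θ i` is the overall probability that signal `i`
is output on input `θ`. -/
noncomputable def composed {Θ : Type*} [Fintype Θ] [DecidableEq Θ] {n K : ℕ}
    (lam : Θ → ℝ) (F : (Fin K → Θ) → Fin K → Fin n → ℝ) (θ : Θ) (i : Fin n) : ℝ :=
  (1 / (K : ℝ)) * ∑ l : Fin K, ∑ v : Fin K → Θ,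
    (if v l = θ then ∏ k ∈ Finset.univ.erase l, lam (v k) else 0) * F v l i

end Persuasion

/-!
Drawing `θ ~ lam` and placing it at a uniformly random index `ℓ` of a tuple whose other
entries are drawn i.i.d. from `lam` is the same as drawing the whole tuple `v ~ lam^K` and
then `ℓ` uniformly. Hence, for every signal `i` and every test function `g`, the
`lam`-expectation of `composed lam F θ i * g θ` is the `lam^K`-expectation of the uniform
average `(1/K) ∑ ℓ, F v ℓ i * g (v ℓ)`. With `g = r · j - ε` and `g = r · i`, each
incentive constraint of the composed scheme becomes a nonnegatively weighted sum of the
corresponding constraints of the schemes `F v`.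
-/

namespace Persuasion

variable {Θ : Type*} [Fintype Θ] [DecidableEq Θ] {K : ℕ}

theorem sum_mul_sum_ite_prod_erase (lam : Θ → ℝ) (l : Fin K) (f : (Fin K → Θ) → Θ → ℝ) :
    ∑ θ, lam θ * ∑ v : Fin K → Θ,
        (if v l = θ then ∏ k ∈ univ.erase l, lam (v k) else 0) * f v θ =
      ∑ v : Fin K → Θ, (∏ k, lam (v k)) * f v (v l) := by
  simp only [mul_sum]
  rw [sum_comm]
  refine sum_congr rfl fun v _ => ?_
  simp only [ite_mul, zero_mul, mul_ite, mul_zero, sum_ite_eq, mem_univ, if_true]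
  rw [← mul_prod_erase univ (fun k => lam (v k)) (mem_univ l)]
  ring

theorem sum_mul_composed_mul {n : ℕ} (lam : Θ → ℝ) (F : (Fin K → Θ) → Fin K → Fin n → ℝ)
    (i : Fin n) (g : Θ → ℝ) :
    ∑ θ, lam θ * composed lam F θ i * g θ =
      ∑ v : Fin K → Θ, (∏ k, lam (v k)) * ((1 / (K : ℝ)) * ∑ l, F v l i * g (v l)) := by
  calc ∑ θ, lam θ * composed lam F θ i * g θ
      = (1 / (K : ℝ)) * ∑ l : Fin K, ∑ θ, lam θ * ∑ v : Fin K → Θ,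
          (if v l = θ then ∏ k ∈ univ.erase l, lam (v k) else 0) * (F v l i * g θ) := by
        simp only [composed, mul_sum, sum_mul]
        rw [sum_comm]
        refine sum_congr rfl fun l _ => sum_congr rfl fun θ _ => sum_congr rfl fun v _ => ?_
        ring
    _ = ∑ v : Fin K → Θ, (∏ k, lam (v k)) * ((1 / (K : ℝ)) * ∑ l, F v l i * g (v l)) := by
        simp only [sum_mul_sum_ite_prod_erase]
        rw [sum_comm, mul_sum]
        refine sum_congr rfl fun v _ => ?_
        rw [mul_sum, mul_sum, mul_sum]
        refine sum_congr rfl fun l _ => ?_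
        ring

end Persuasion

theorem composed_scheme_eic_general
    {Θ : Type*} [Fintype Θ] [DecidableEq Θ] {n K : ℕ}
    (lam : Θ → ℝ) (hlam : IsDist lam)
    (r : Θ → Fin n → ℝ) (ε : ℝ)
    (F : (Fin K → Θ) → Fin K → Fin n → ℝ)
    -- which is `ε`-incentive compatible for the uniform distribution on the tuple `v`:
    (hFIC : ∀ v : Fin K → Θ, ∀ i j : Fin n,
      (1 / (K : ℝ)) * ∑ k, F v k i * (r (v k) j - ε) ≤
        (1 / (K : ℝ)) * ∑ k, F v k i * r (v k) i) :
    EIC lam r ε (composed lam F) := by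
  intro i j
  rw [sum_mul_composed_mul lam F i (fun θ => r θ j - ε),
    sum_mul_composed_mul lam F i (fun θ => r θ i)]
  exact sum_le_sum fun v _ =>
    mul_le_mul_of_nonneg_left (hFIC v i j) (prod_nonneg fun k _ => hlam.1 (v k))

/-- if `F` maps every `K`-tuple of states to a direct scheme on the
indices `[K]` that is `ε`-incentive compatible for the uniform distribution on the
tuple, then the composed scheme is `ε`-incentive compatible for `lam`. -/
theorem composed_scheme_eic
    {Θ : Type*} [Fintype Θ] [DecidableEq Θ] {n K : ℕ} (hK : 1 ≤ K)
    (lam : Θ → ℝ) (hlam : IsDist lam)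
    (r : Θ → Fin n → ℝ) (ε : ℝ) (hε : 0 ≤ ε)
    (F : (Fin K → Θ) → Fin K → Fin n → ℝ)
    -- `F v` is a direct scheme on indices `[K]`:
    (hF : ∀ v k, (∀ i, 0 ≤ F v k i) ∧ ∑ i, F v k i = 1)
    -- which is `ε`-incentive compatible for the uniform distribution on the tuple `v`:
    (hFIC : ∀ v : Fin K → Θ, ∀ i j : Fin n,
      (1 / (K : ℝ)) * ∑ k, F v k i * (r (v k) j - ε) ≤
        (1 / (K : ℝ)) * ∑ k, F v k i * r (v k) i) :
    EIC lam r ε (composed lam F) :=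
  composed_scheme_eic_general lam hlam r ε F hFIC
end
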